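/- arXiv:1406.1744 — 2 statements merged into one kernel-verified Lean document; each statement's English description precedes it below -/
import Mathlib

section
/- Let F: L → L̃ be a continuous ∞-morphism of filtered shifted L∞-algebras and α ∈ L a degree-0 element. Then curv(F_*(α)) = Σ_{m≥0} (1/m!) F'(α^m · curv(α)). In particular, if curv(α) = 0 then curv(F_*(α)) = 0. -/
open scoped BigOperators

/-! # Core framework: filtered shifted `L∞`-algebras (`SLie∞`-algebras)

A filtered shifted `L∞`-algebra is modelled as a `ℤ`-graded `k`-module `L` with
degree-`1` graded-symmetric multibrackets (the differential absorbed as the unary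
bracket), a complete descending filtration compatible with the brackets, and the
shifted `L∞` (Jacobi) relations expressed with Koszul signs and shuffles. -/

/-- The Koszul sign of a permutation `σ` acting on homogeneous elements of degrees `d`. -/
def koszulSign (k : Type) [Field k] {m : ℕ} (σ : Equiv.Perm (Fin m)) (d : Fin m → ℤ) : k :=
  ∏ p ∈ Finset.univ.filter (fun p : Fin m × Fin m => p.1 < p.2 ∧ σ p.2 < σ p.1),
    (-1 : k) ^ ((d p.1) * (d p.2)).natAbs

/-- The set of `(p, m-p)`-shuffles in the symmetric group on `m` letters. -/
def shuffles (p m : ℕ) : Finset (Equiv.Perm (Fin m)) :=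
  Finset.univ.filter fun σ =>
    (∀ i j : Fin m, i < j → (j : ℕ) < p → σ i < σ j) ∧
    (∀ i j : Fin m, i < j → p ≤ (i : ℕ) → σ i < σ j)

section Front
variable {L : Type}

/-- First `p` arguments `v (σ 1), …, v (σ p)`. -/
def frontV {m p : ℕ} (hpm : p ≤ m) (v : Fin m → L) (σ : Equiv.Perm (Fin m)) : Fin p → L :=
  fun i => v (σ ⟨i, lt_of_lt_of_le i.2 hpm⟩)

/-- Remaining arguments `v (σ (p+1)), …, v (σ m)`. -/
def backV {m p : ℕ} (hpm : p ≤ m) (v : Fin m → L) (σ : Equiv.Perm (Fin m)) :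
    Fin (m - p) → L :=
  fun j => v (σ ⟨p + j, by have := j.2; omega⟩)

end Front

/-- Convergence of the series `∑ f i` to `s` in the topology defined by a
descending filtration `F` by submodules. -/
def HasFSumF (k : Type) [Field k] {L : Type} [AddCommGroup L] [Module k L]
    (F : ℕ → Submodule k L) (f : ℕ → L) (s : L) : Prop :=
  ∀ n : ℕ, ∃ N : ℕ, ∀ M : ℕ, N ≤ M → s - ∑ i ∈ Finset.range M, f i ∈ F n

/-- The (choice of a) limit of a series in the filtration topology; junk value `0`
if the series does not converge. -/
noncomputable def limF (k : Type) [Field k] {L : Type} [AddCommGroup L] [Module k L]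
    (F : ℕ → Submodule k L) (f : ℕ → L) : L :=
  letI := Classical.propDecidable (∃ s, HasFSumF k F f s)
  if h : ∃ s, HasFSumF k F f s then h.choose else 0

/-- The term `ε(σ; v) ⬝ out ( inn (v_{σ(1)}, …, v_{σ(p)}), v_{σ(p+1)}, …, v_{σ(m)} )`
appearing in the shifted `L∞` relations and in the compatibility equations for
`∞`-morphisms. -/
def shTerm (k : Type) [Field k] {L L' : Type} [AddCommGroup L] [Module k L]
    [AddCommGroup L'] [Module k L']
    (inn : ∀ m : ℕ, MultilinearMap k (fun _ : Fin m => L) L)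
    (out : ∀ m : ℕ, MultilinearMap k (fun _ : Fin m => L) L')
    {m : ℕ} (v : Fin m → L) (d : Fin m → ℤ) (p : ℕ) (hpm : p ≤ m)
    (σ : Equiv.Perm (Fin m)) : L' :=
  koszulSign k σ d • out (m - p + 1) (Fin.cons (inn p (frontV hpm v σ)) (backV hpm v σ))

/-- A filtered shifted `L∞`-algebra (`SLie∞`-algebra): a `ℤ`-graded module with
degree-`1` graded-symmetric brackets (the differential is the unary bracket),
satisfying the shifted `L∞` relations, together with a complete descending
filtration `L = filt 1 ⊇ filt 2 ⊇ ⋯` compatible with the brackets. -/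
structure FSLie (k : Type) [Field k] [CharZero k] (L : Type) [AddCommGroup L]
    [Module k L] where
  /-- the grading (cochain degrees) -/
  gr : ℤ → Submodule k L
  internal : DirectSum.IsInternal gr
  /-- the multibrackets; `br 1` is the differential `∂` -/
  br : ∀ m : ℕ, MultilinearMap k (fun _ : Fin m => L) L
  br_zero : br 0 = 0
  br_degree : ∀ (m : ℕ) (v : Fin m → L) (d : Fin m → ℤ),
      (∀ i, v i ∈ gr (d i)) → br m v ∈ gr ((∑ i, d i) + 1)
  br_symm : ∀ (m : ℕ) (σ : Equiv.Perm (Fin m)) (v : Fin m → L) (d : Fin m → ℤ),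
      (∀ i, v i ∈ gr (d i)) → br m (v ∘ σ) = koszulSign k σ d • br m v
  /-- the complete descending filtration -/
  filt : ℕ → Submodule k L
  filt_zero : filt 0 = ⊤
  filt_one : filt 1 = ⊤
  filt_antitone : ∀ {i j : ℕ}, i ≤ j → filt j ≤ filt i
  filt_br : ∀ (m : ℕ) (v : Fin m → L) (w : Fin m → ℕ), 2 ≤ m →
      (∀ i, v i ∈ filt (w i)) → br m v ∈ filt (∑ i, w i)
  filt_diff : ∀ (n : ℕ) (x : L), x ∈ filt n → br 1 ![x] ∈ filt n
  hausdorff : ∀ x : L, (∀ n, x ∈ filt n) → x = 0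
  complete : ∀ a : ℕ → L, (∀ n, a (n + 1) - a n ∈ filt (n + 1)) →
      ∃ s, ∀ n, s - a n ∈ filt (n + 1)
  gr_closed : ∀ (d : ℤ) (f : ℕ → L) (s : L), (∀ n, f n ∈ gr d) →
      HasFSumF k filt f s → s ∈ gr d
  /-- the shifted `L∞` relations (with the differential absorbed as `br 1`) -/
  jacobi : ∀ (m : ℕ) (v : Fin m → L) (d : Fin m → ℤ), (∀ i, v i ∈ gr (d i)) →
      (∑ p ∈ (Finset.Icc 1 m).attach, ∑ σ ∈ shuffles p.1 m,
        shTerm k br br v d p.1 (Finset.mem_Icc.mp p.2).2 σ) = 0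

section Defs
variable (k : Type) [Field k] [CharZero k] {L L' : Type} [AddCommGroup L] [Module k L]
  [AddCommGroup L'] [Module k L']

/-- The terms of the curvature series `curv(α) = ∂α + ∑_{m ≥ 2} (1/m!) {α,…,α}`
(here `∂α = {α}` is the `m = 1` term). -/
def curvSeries (A : FSLie k L) (α : L) : ℕ → L :=
  fun m => if m = 0 then 0 else ((m.factorial : k)⁻¹) • A.br m (fun _ => α)

/-- A Maurer–Cartan element: a degree-`0` element with vanishing curvature. -/
def IsMC (A : FSLie k L) (α : L) : Prop :=
  α ∈ A.gr 0 ∧ HasFSumF k A.filt (curvSeries k A α) 0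

/-- The terms of the series defining the twisted differential
`∂^α(x) = ∂x + ∑_{j ≥ 1} (1/j!) {α,…,α,x}`. -/
def twDiffSeries (A : FSLie k L) (α x : L) : ℕ → L :=
  fun j => ((j.factorial : k)⁻¹) • A.br (j + 1) (Fin.snoc (fun _ : Fin j => α) x)

/-- The terms of the series defining the twisted brackets
`{v₁,…,v_m}^α = ∑_{j ≥ 0} (1/j!) {α,…,α,v₁,…,v_m}`. -/
def twBrSeries (A : FSLie k L) (α : L) {m : ℕ} (v : Fin m → L) : ℕ → L :=
  fun j => ((j.factorial : k)⁻¹) • A.br (j + m) (Fin.append (fun _ : Fin j => α) v)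

/-- `A'` is the twist of `A` by `α`: same grading and filtration, and the brackets of
`A'` are the sums of the twisted-bracket series of `A` at `α`. -/
def IsTwist (A A' : FSLie k L) (α : L) : Prop :=
  A'.gr = A.gr ∧ A'.filt = A.filt ∧
  ∀ (m : ℕ), 1 ≤ m → ∀ v : Fin m → L,
    HasFSumF k A.filt (twBrSeries k A α v) (A'.br m v)

end Defs

/-! ### Compositions, block shuffles, and `∞`-morphisms -/

/-- Compositions of `m` into `t` (ordered) positive parts. -/
def compositions (t m : ℕ) : Finset (Fin t → ℕ) :=
  (Fintype.piFinset fun _ : Fin t => Finset.range (m + 1)).filter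
    fun c => (∀ i, 1 ≤ c i) ∧ (∑ i, c i) = m

/-- The starting index of the `a`-th block of a composition `c`. -/
def offsetC {t : ℕ} (c : Fin t → ℕ) (a : Fin t) : ℕ :=
  ∑ i ∈ Finset.univ.filter (fun i => i < a), c i

theorem offsetC_add_lt {t m : ℕ} {c : Fin t → ℕ} (hc : c ∈ compositions t m)
    (a : Fin t) {j : ℕ} (hj : j < c a) : offsetC c a + j < m := by
  obtain ⟨-, -, hsum⟩ : c ∈ Fintype.piFinset (fun _ : Fin t => Finset.range (m+1)) ∧
      (∀ i, 1 ≤ c i) ∧ (∑ i, c i) = m := by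
    simpa [compositions, and_assoc] using hc
  have hna : a ∉ Finset.univ.filter (fun i => i < a) := by simp
  have h2 : (∑ i ∈ insert a (Finset.univ.filter (fun i => i < a)), c i) ≤ ∑ i, c i :=
    Finset.sum_le_sum_of_subset (Finset.subset_univ _)
  rw [Finset.sum_insert hna] at h2
  have h1 : offsetC c a + c a ≤ ∑ i, c i := by unfold offsetC; omega
  omega

/-- The `SH`-shuffles associated to a composition `c` of `m`: permutations that are
increasing within each block and whose values at the first elements of the blocks
are increasing. -/
def blockShuffles {t : ℕ} (c : Fin t → ℕ) (m : ℕ) : Finset (Equiv.Perm (Fin m)) :=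
  Finset.univ.filter fun σ =>
    (∀ a : Fin t, ∀ i j : Fin m, i < j → offsetC c a ≤ (i : ℕ) →
        (j : ℕ) < offsetC c a + c a → σ i < σ j) ∧
    (∀ a b : Fin t, a < b → ∀ i j : Fin m, (i : ℕ) = offsetC c a →
        (j : ℕ) = offsetC c b → σ i < σ j)

/-- The index `τ(offset(a) + j)` of the `j`-th element of the `a`-th block. -/
def blockIdx {t m : ℕ} {c : Fin t → ℕ} (hc : c ∈ compositions t m)
    (τ : Equiv.Perm (Fin m)) (a : Fin t) (j : Fin (c a)) : Fin m :=
  τ ⟨offsetC c a + j, offsetC_add_lt hc a j.2⟩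

section Mor
variable (k : Type) [Field k] [CharZero k] {L L' : Type} [AddCommGroup L] [Module k L]
  [AddCommGroup L'] [Module k L']

/-- Taylor components of a (continuous, degree-`0`, graded-symmetric) candidate
`∞`-morphism between filtered shifted `L∞`-algebras, without the compatibility
with the codifferentials. -/
structure MorData (A : FSLie k L) (B : FSLie k L') where
  T : ∀ m : ℕ, MultilinearMap k (fun _ : Fin m => L) L'
  T_zero : T 0 = 0
  T_degree : ∀ (m : ℕ) (v : Fin m → L) (d : Fin m → ℤ),
      (∀ i, v i ∈ A.gr (d i)) → T m v ∈ B.gr (∑ i, d i)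
  T_symm : ∀ (m : ℕ) (σ : Equiv.Perm (Fin m)) (v : Fin m → L) (d : Fin m → ℤ),
      (∀ i, v i ∈ A.gr (d i)) → T m (v ∘ σ) = koszulSign k σ d • T m v
  T_filt : ∀ (m : ℕ) (v : Fin m → L) (w : Fin m → ℕ),
      (∀ i, v i ∈ A.filt (w i)) → T m v ∈ B.filt (∑ i, w i)

/-- Left-hand side (the `F ∘ Q` side) of the compatibility equation of an
`∞`-morphism with the codifferentials, evaluated on `v₁ ⋯ v_m`. -/
def compLHS (A : FSLie k L) (T : ∀ m : ℕ, MultilinearMap k (fun _ : Fin m => L) L')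
    {m : ℕ} (v : Fin m → L) (d : Fin m → ℤ) : L' :=
  ∑ p ∈ (Finset.Icc 1 m).attach, ∑ σ ∈ shuffles p.1 m,
    shTerm k A.br T v d p.1 (Finset.mem_Icc.mp p.2).2 σ

/-- Right-hand side (the `Q̃ ∘ F` side) of the compatibility equation, a sum over
partitions of `{1,…,m}` encoded by compositions and `SH`-shuffles. -/
def compRHS (B : FSLie k L') (T : ∀ m : ℕ, MultilinearMap k (fun _ : Fin m => L) L')
    {m : ℕ} (v : Fin m → L) (d : Fin m → ℤ) : L' :=
  ∑ t ∈ (Finset.Icc 1 m).attach, ∑ c ∈ (compositions t.1 m).attach,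
    ∑ τ ∈ blockShuffles c.1 m,
      koszulSign k τ d •
        B.br t.1 (fun a => T (c.1 a) (fun j => v (blockIdx c.2 τ a j)))

/-- The compatibility equation of an `∞`-morphism with the codifferentials, on
homogeneous inputs `v` of degrees `d`. -/
def CompatEq (A : FSLie k L) (B : FSLie k L')
    (T : ∀ m : ℕ, MultilinearMap k (fun _ : Fin m => L) L')
    {m : ℕ} (v : Fin m → L) (d : Fin m → ℤ) : Prop :=
  compLHS k A T v d = compRHS k B T v d

/-- A (continuous) `∞`-morphism of filtered shifted `L∞`-algebras. -/
structure InfMor (A : FSLie k L) (B : FSLie k L') extends MorData k A B where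
  compat : ∀ (m : ℕ) (v : Fin m → L) (d : Fin m → ℤ),
      (∀ i, v i ∈ A.gr (d i)) → CompatEq k A B T v d

/-- The series whose sum is the pushforward `F_*(α) = ∑_{j ≥ 1} (1/j!) F'(α^j)`. -/
def pushSeries (T : ∀ m : ℕ, MultilinearMap k (fun _ : Fin m => L) L') (α : L) : ℕ → L' :=
  fun j => if j = 0 then 0 else ((j.factorial : k)⁻¹) • T j (fun _ => α)

end Mor

/-! ### Degree-indexed Taylor families, twisting and composition of enhanced morphisms -/

/-- A degree-indexed family of Taylor coefficients: the value on `v₁ ⋯ v_m` where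
`vᵢ` is (declared) homogeneous of degree `dᵢ`. -/
def Fam (k : Type) [Field k] (L L' : Type) : Type :=
  ∀ m : ℕ, (Fin m → L) → (Fin m → ℤ) → L'

section Fam
variable (k : Type) [Field k] [CharZero k] {L₁ L₂ L₃ : Type}
  [AddCommGroup L₁] [Module k L₁] [AddCommGroup L₂] [Module k L₂]
  [AddCommGroup L₃] [Module k L₃]

/-- The degree-indexed family underlying Taylor components `T`. -/
def famOf (T : ∀ m : ℕ, MultilinearMap k (fun _ : Fin m => L₁) L₂) : Fam k L₁ L₂ :=
  fun m v _ => T m v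

/-- Pushforward of a degree-`0` element along a Taylor family:
`F_*(α) = ∑_{j ≥ 1} (1/j!) F'(α^j)` (a limit in the filtration topology). -/
noncomputable def pushElD (B : FSLie k L₂) (T : Fam k L₁ L₂) (α : L₁) : L₂ :=
  limF k B.filt (fun j => if j = 0 then 0 else ((j.factorial : k)⁻¹) • T j (fun _ => α) (fun _ => 0))

/-- Twist of a Taylor family by a degree-`0` element `α` of the source:
`(F^α)'(v₁ ⋯ v_m) = ∑_{j ≥ 0} (1/j!) F'(α^j v₁ ⋯ v_m)`. -/
noncomputable def twistFamD (B : FSLie k L₂) (T : Fam k L₁ L₂) (α : L₁) : Fam k L₁ L₂ :=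
  fun m v d => limF k B.filt
    (fun j => ((j.factorial : k)⁻¹) •
      T (j + m) (Fin.append (fun _ : Fin j => α) v) (Fin.append (fun _ : Fin j => (0 : ℤ)) d))

/-- Composition of Taylor families: `(G ∘ F)'(v₁ ⋯ v_m) = ∑ ± G'(F'(b₁), …, F'(b_t))`
over partitions of `{1,…,m}` into blocks `b₁, …, b_t`. -/
def compFam (S : Fam k L₂ L₃) (T : Fam k L₁ L₂) : Fam k L₁ L₃ :=
  fun m v d =>
    ∑ t ∈ (Finset.Icc 1 m).attach, ∑ c ∈ (compositions t.1 m).attach,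
      ∑ τ ∈ blockShuffles c.1 m,
        koszulSign k τ d •
          S t.1 (fun a => T (c.1 a) (fun j => v (blockIdx c.2 τ a j))
              (fun j => d (blockIdx c.2 τ a j)))
            (fun a => ∑ j, d (blockIdx c.2 τ a j))

/-- Composition of enhanced morphisms, at the level of the underlying data
`(MC element, Taylor family)`:
`(α₃, G) ∘ (α₂, F) = (α₃ + G_*(α₂), G^{α₂} ∘ F)`. -/
noncomputable def enhComp (C : FSLie k L₃) (g : L₃ × Fam k L₂ L₃) (f : L₂ × Fam k L₁ L₂) :
    L₃ × Fam k L₁ L₃ :=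
  (g.1 + pushElD k C g.2 f.1, compFam k (twistFamD k C g.2 f.1) f.2)

end Fam

/-! ### Auxiliary lemmas (added for the proof of Statement 6) -/

set_option linter.unusedSectionVars false
set_option linter.unusedVariables false

section AuxBasic

variable {k : Type} [Field k] [CharZero k]

theorem koszulSign_eq_one {m : ℕ} (σ : Equiv.Perm (Fin m)) (d : Fin m → ℤ)
    (hd : ∀ i j : Fin m, i ≠ j → d i * d j = 0) : koszulSign k σ d = 1 := by
  unfold koszulSign
  refine Finset.prod_eq_one fun p hp => ?_
  rcases Finset.mem_filter.mp hp with ⟨-, h1, -⟩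
  rw [hd p.1 p.2 (ne_of_lt h1)]
  simp

theorem koszulSign_zero {m : ℕ} (σ : Equiv.Perm (Fin m)) :
    koszulSign k σ (fun _ => (0 : ℤ)) = 1 :=
  koszulSign_eq_one σ _ (by intro i j _; simp)

end AuxBasic

section AuxBlock

variable {t m : ℕ} {c : Fin t → ℕ}

theorem offsetC_mono_succ {a b : Fin t} (hab : (b : ℕ) = (a : ℕ) + 1) :
    offsetC c b = offsetC c a + c a := by
  unfold offsetC
  have : Finset.univ.filter (fun i : Fin t => i < b)
      = insert a (Finset.univ.filter (fun i : Fin t => i < a)) := by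
    ext x
    simp only [Finset.mem_filter, Finset.mem_insert, Finset.mem_univ, true_and, Fin.lt_def]
    constructor
    · intro hx
      rcases Nat.lt_or_ge (x : ℕ) (a : ℕ) with h | h
      · exact Or.inr h
      · left; apply Fin.ext; omega
    · rintro (rfl | hx) <;> omega
  rw [this, Finset.sum_insert (by simp)]
  ring

theorem offsetC_block_le {a b : Fin t} (hab : a < b) :
    offsetC c a + c a ≤ offsetC c b := by
  unfold offsetC
  have hsub : insert a (Finset.univ.filter (fun i : Fin t => i < a))
      ⊆ Finset.univ.filter (fun i : Fin t => i < b) := by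
    intro x hx
    rcases Finset.mem_insert.mp hx with rfl | hx
    · simp [hab]
    · simp only [Finset.mem_filter, Finset.mem_univ, true_and] at hx ⊢
      exact lt_trans hx hab
  calc offsetC c a + c a = ∑ i ∈ insert a (Finset.univ.filter (fun i : Fin t => i < a)), c i := by
        rw [Finset.sum_insert (by simp)]; unfold offsetC; ring
    _ ≤ _ := Finset.sum_le_sum_of_subset hsub

theorem offsetC_add_le (hsum : ∑ i, c i = m) (a : Fin t) :
    offsetC c a + c a ≤ m := by
  have : insert a (Finset.univ.filter (fun i : Fin t => i < a)) ⊆ Finset.univ :=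
    Finset.subset_univ _
  have h := Finset.sum_le_sum_of_subset (f := c) this
  rw [Finset.sum_insert (by simp)] at h
  unfold offsetC
  omega

theorem offsetC_add_lt' (hsum : ∑ i, c i = m) (a : Fin t) {j : ℕ} (hj : j < c a) :
    offsetC c a + j < m := by
  have := offsetC_add_le hsum a
  omega

theorem offsetC_last (hsum : ∑ i, c i = m) {a : Fin t} (ha : (a : ℕ) + 1 = t) :
    offsetC c a + c a = m := by
  have : insert a (Finset.univ.filter (fun i : Fin t => i < a)) = Finset.univ := by
    ext x
    simp only [Finset.mem_insert, Finset.mem_filter, Finset.mem_univ, true_and, iff_true,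
      Fin.lt_def]
    have hx := x.2
    rcases Nat.lt_or_ge (x : ℕ) (a : ℕ) with h | h
    · exact Or.inr h
    · left; apply Fin.ext; omega
  have h := congrArg (fun (s : Finset (Fin t)) => ∑ i ∈ s, c i) this
  rw [Finset.sum_insert (by simp)] at h
  unfold offsetC
  rw [hsum] at h
  omega

theorem block_exists (hsum : ∑ i, c i = m) (i : Fin m) :
    ∃ a : Fin t, offsetC c a ≤ (i : ℕ) ∧ (i : ℕ) < offsetC c a + c a := by
  have ht : 0 < t := by
    rcases Nat.eq_zero_or_pos t with rfl | h
    · exfalso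
      rw [Finset.univ_eq_empty, Finset.sum_empty] at hsum
      have := i.2
      omega
    · exact h
  set a0 : Fin t := ⟨0, ht⟩ with ha0
  have hoff0 : offsetC c a0 = 0 := by
    unfold offsetC
    rw [Finset.filter_false_of_mem, Finset.sum_empty]
    intro x _
    simp [ha0, Fin.lt_def]
  set S : Finset (Fin t) := Finset.univ.filter (fun a => offsetC c a ≤ (i : ℕ)) with hS
  have hSne : S.Nonempty := ⟨a0, by simp [hS, hoff0]⟩
  set a := S.max' hSne with ha
  have haS : a ∈ S := S.max'_mem hSne
  have h1 : offsetC c a ≤ (i : ℕ) := by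
    simpa [hS] using haS
  refine ⟨a, h1, ?_⟩
  by_contra hcon
  push_neg at hcon
  rcases Nat.lt_or_ge ((a : ℕ) + 1) t with hlt | hge
  · set b : Fin t := ⟨(a : ℕ) + 1, hlt⟩ with hb
    have : offsetC c b ≤ (i : ℕ) := by
      rw [offsetC_mono_succ (a := a) (by simp [hb])]
      omega
    have hbS : b ∈ S := by simp [hS, this]
    have := S.le_max' b hbS
    rw [← ha] at this
    have : (b : ℕ) ≤ (a : ℕ) := this
    simp [hb] at this
  · have hlast : (a : ℕ) + 1 = t := by have := a.2; omega
    have := offsetC_last hsum hlast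
    have := i.2
    omega

theorem block_unique (hsum : ∑ i, c i = m) (i : Fin m) {a b : Fin t}
    (ha1 : offsetC c a ≤ (i : ℕ)) (ha2 : (i : ℕ) < offsetC c a + c a)
    (hb1 : offsetC c b ≤ (i : ℕ)) (hb2 : (i : ℕ) < offsetC c b + c b) : a = b := by
  rcases lt_trichotomy a b with h | h | h
  · have := offsetC_block_le (c := c) h; omega
  · exact h
  · have := offsetC_block_le (c := c) h; omega

/-- The block containing position `i`. -/
noncomputable def blockOf (hsum : ∑ i, c i = m) (i : Fin m) : Fin t :=
  (block_exists hsum i).choose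

theorem blockOf_le (hsum : ∑ i, c i = m) (i : Fin m) :
    offsetC c (blockOf hsum i) ≤ (i : ℕ) :=
  (block_exists hsum i).choose_spec.1

theorem blockOf_lt (hsum : ∑ i, c i = m) (i : Fin m) :
    (i : ℕ) < offsetC c (blockOf hsum i) + c (blockOf hsum i) :=
  (block_exists hsum i).choose_spec.2

theorem blockOf_eq (hsum : ∑ i, c i = m) {i : Fin m} {a : Fin t}
    (h1 : offsetC c a ≤ (i : ℕ)) (h2 : (i : ℕ) < offsetC c a + c a) :
    blockOf hsum i = a :=
  block_unique hsum i (blockOf_le hsum i) (blockOf_lt hsum i) h1 h2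

theorem blockOf_mk (hsum : ∑ i, c i = m) (a : Fin t) {j : ℕ} (hj : j < c a) :
    blockOf hsum ⟨offsetC c a + j, offsetC_add_lt' hsum a hj⟩ = a :=
  blockOf_eq hsum (by simp) (by simp; omega)

end AuxBlock

section AuxCount

theorem list_get_congr {α : Type} (l l' : List α) (h : l = l') {j j' : ℕ} (hjj : j = j')
    (hj : j < l.length) (hj' : j' < l'.length) : l.get ⟨j, hj⟩ = l'.get ⟨j', hj'⟩ := by
  subst h; subst hjj; rfl

variable {t m : ℕ} {c : Fin t → ℕ}

/-- The fiber of `g` over `a`. -/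
def fiberF (g : Fin m → Fin t) (a : Fin t) : Finset (Fin m) :=
  Finset.univ.filter (fun i => g i = a)

theorem mem_fiberF {g : Fin m → Fin t} {a : Fin t} {i : Fin m} :
    i ∈ fiberF g a ↔ g i = a := by simp [fiberF]

/-- Functions with prescribed fiber cardinalities. -/
def Gall (c : Fin t → ℕ) (m : ℕ) : Finset (Fin m → Fin t) :=
  Finset.univ.filter (fun g => ∀ a, (fiberF g a).card = c a)

theorem mem_Gall {g : Fin m → Fin t} : g ∈ Gall c m ↔ ∀ a, (fiberF g a).card = c a := by
  simp [Gall]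

/-- Fibers have increasing minima. -/
def minsInc (g : Fin m → Fin t) : Prop :=
  ∀ a b : Fin t, a < b → ∀ (ha : (fiberF g a).Nonempty) (hb : (fiberF g b).Nonempty),
    (fiberF g a).min' ha < (fiberF g b).min' hb

open Classical in
/-- Functions with prescribed fiber cardinalities and increasing fiber minima. -/
noncomputable def Gmin (c : Fin t → ℕ) (m : ℕ) : Finset (Fin m → Fin t) :=
  (Gall c m).filter (fun g => minsInc g)

open Classical in
theorem mem_Gmin {g : Fin m → Fin t} : g ∈ Gmin c m ↔ g ∈ Gall c m ∧ minsInc g := by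
  rw [Gmin]
  rw [Finset.mem_filter]

/-- The "weak shuffles": permutations increasing within each block. -/
def wkShuffles (c : Fin t → ℕ) (m : ℕ) : Finset (Equiv.Perm (Fin m)) :=
  Finset.univ.filter fun σ =>
    ∀ a : Fin t, ∀ i j : Fin m, i < j → offsetC c a ≤ (i : ℕ) →
      (j : ℕ) < offsetC c a + c a → σ i < σ j

theorem mem_wkShuffles {σ : Equiv.Perm (Fin m)} :
    σ ∈ wkShuffles c m ↔ ∀ a : Fin t, ∀ i j : Fin m, i < j → offsetC c a ≤ (i : ℕ) →
      (j : ℕ) < offsetC c a + c a → σ i < σ j := by simp [wkShuffles]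

theorem mem_blockShuffles' {σ : Equiv.Perm (Fin m)} :
    σ ∈ blockShuffles c m ↔
      (∀ a : Fin t, ∀ i j : Fin m, i < j → offsetC c a ≤ (i : ℕ) →
        (j : ℕ) < offsetC c a + c a → σ i < σ j) ∧
      (∀ a b : Fin t, a < b → ∀ i j : Fin m, (i : ℕ) = offsetC c a →
        (j : ℕ) = offsetC c b → σ i < σ j) := by
  simp [blockShuffles]

/-- The block-labelling map associated to a permutation. -/
noncomputable def PhiB (hsum : ∑ i, c i = m) (σ : Equiv.Perm (Fin m)) : Fin m → Fin t :=
  fun i => blockOf hsum (σ.symm i)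

theorem card_fiber_blockOf (hsum : ∑ i, c i = m) (a : Fin t) :
    (fiberF (blockOf hsum) a).card = c a := by
  have huniv : (Finset.univ : Finset (Fin (c a))).card = c a := by simp
  rw [← huniv]
  refine Finset.card_bij (fun x hx => ⟨(x : ℕ) - offsetC c a, ?_⟩) ?_ ?_ ?_
  · rw [mem_fiberF] at hx
    have h1 := blockOf_le hsum x
    have h2 := blockOf_lt hsum x
    rw [hx] at h1 h2
    omega
  · intro x hx; simp
  · intro x hx y hy hxy
    rw [mem_fiberF] at hx hy
    have hx1 := blockOf_le hsum x
    have hy1 := blockOf_le hsum y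
    rw [hx] at hx1; rw [hy] at hy1
    have := congrArg (fun z : Fin (c a) => (z : ℕ)) hxy
    simp only at this
    apply Fin.ext
    omega
  · intro j _
    refine ⟨⟨offsetC c a + (j : ℕ), offsetC_add_lt' hsum a j.2⟩, ?_, ?_⟩
    · rw [mem_fiberF]; exact blockOf_mk hsum a j.2
    · apply Fin.ext; simp

theorem fiberF_PhiB (hsum : ∑ i, c i = m) (σ : Equiv.Perm (Fin m)) (a : Fin t) :
    fiberF (PhiB hsum σ) a = (fiberF (blockOf hsum) a).image σ := by
  ext i
  simp only [mem_fiberF, Finset.mem_image, PhiB]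
  constructor
  · intro h
    exact ⟨σ.symm i, h, by simp⟩
  · rintro ⟨x, hx, rfl⟩
    rw [Equiv.symm_apply_apply]
    exact hx

theorem card_fiber_PhiB (hsum : ∑ i, c i = m) (σ : Equiv.Perm (Fin m)) (a : Fin t) :
    (fiberF (PhiB hsum σ) a).card = c a := by
  rw [fiberF_PhiB, Finset.card_image_of_injective _ σ.injective, card_fiber_blockOf]

theorem PhiB_mem_Gall (hsum : ∑ i, c i = m) (σ : Equiv.Perm (Fin m)) :
    PhiB hsum σ ∈ Gall c m :=
  mem_Gall.mpr (card_fiber_PhiB hsum σ)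

/-- The enumeration of the `a`-th block by a permutation. -/
noncomputable def embB (hsum : ∑ i, c i = m) (σ : Equiv.Perm (Fin m)) (a : Fin t) :
    Fin (c a) → Fin m :=
  fun j => σ ⟨offsetC c a + (j : ℕ), offsetC_add_lt' hsum a j.2⟩

theorem embB_mem (hsum : ∑ i, c i = m) (σ : Equiv.Perm (Fin m)) (a : Fin t) (j : Fin (c a)) :
    embB hsum σ a j ∈ fiberF (PhiB hsum σ) a := by
  rw [mem_fiberF, PhiB, embB, Equiv.symm_apply_apply]
  exact blockOf_mk hsum a j.2

theorem embB_strictMono (hsum : ∑ i, c i = m) {σ : Equiv.Perm (Fin m)}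
    (hσ : σ ∈ wkShuffles c m) (a : Fin t) : StrictMono (embB hsum σ a) := by
  intro j j' hjj
  have hjj' : (j : ℕ) < (j' : ℕ) := hjj
  refine mem_wkShuffles.mp hσ a _ _ ?_ ?_ ?_
  · exact Fin.mk_lt_mk.mpr (by omega)
  · simp
  · simp [j'.2]

theorem embB_eq_orderEmbOfFin (hsum : ∑ i, c i = m) {σ : Equiv.Perm (Fin m)}
    (hσ : σ ∈ wkShuffles c m) (a : Fin t) :
    embB hsum σ a = (fiberF (PhiB hsum σ) a).orderEmbOfFin (card_fiber_PhiB hsum σ a) :=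
  Finset.orderEmbOfFin_unique _ (embB_mem hsum σ a) (embB_strictMono hsum hσ a)

theorem oEoF_congr {n m : ℕ} {s s' : Finset (Fin m)} (hss : s = s') (h : s.card = n)
    (h' : s'.card = n) (j : Fin n) : s.orderEmbOfFin h j = s'.orderEmbOfFin h' j := by
  subst hss; rfl

theorem PhiB_injOn (hsum : ∑ i, c i = m) {σ σ' : Equiv.Perm (Fin m)}
    (hσ : σ ∈ wkShuffles c m) (hσ' : σ' ∈ wkShuffles c m)
    (h : PhiB hsum σ = PhiB hsum σ') : σ = σ' := by
  have hset : ∀ a : Fin t, fiberF (PhiB hsum σ) a = fiberF (PhiB hsum σ') a := by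
    intro a; rw [h]
  have hemb : ∀ (a : Fin t) (j : Fin (c a)), embB hsum σ a j = embB hsum σ' a j := by
    intro a j
    exact (congrFun (embB_eq_orderEmbOfFin hsum hσ a) j).trans
      ((oEoF_congr (hset a) _ _ j).trans
        (congrFun (embB_eq_orderEmbOfFin hsum hσ' a) j).symm)
  apply Equiv.ext
  intro i
  have h1 := blockOf_le hsum i
  have h2 := blockOf_lt hsum i
  have hthis := hemb (blockOf hsum i) ⟨(i : ℕ) - offsetC c (blockOf hsum i), by omega⟩
  simp only [embB] at hthis
  have e : (⟨offsetC c (blockOf hsum i) + ((i : ℕ) - offsetC c (blockOf hsum i)),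
      offsetC_add_lt' hsum _ (by omega)⟩ : Fin m) = i := Fin.ext (by simp; omega)
  exact (congrArg σ e).symm.trans (hthis.trans (congrArg σ' e))

theorem PhiB_surjOn (hsum : ∑ i, c i = m) {g : Fin m → Fin t} (hg : g ∈ Gall c m) :
    ∃ σ ∈ wkShuffles c m, PhiB hsum σ = g := by
  classical
  have hcard : ∀ a, (fiberF g a).card = c a := mem_Gall.mp hg
  have hpf : ∀ i : Fin m, (i : ℕ) - offsetC c (blockOf hsum i) < c (blockOf hsum i) := by
    intro i
    have h1 := blockOf_le hsum i
    have h2 := blockOf_lt hsum i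
    omega
  set L : Fin t → List (Fin m) := fun a => (fiberF g a).sort (· ≤ ·) with hL
  have hlen : ∀ a, (L a).length = c a := by
    intro a; rw [hL]; simp only [Finset.length_sort]; exact hcard a
  set f : Fin m → Fin m := fun i =>
    (L (blockOf hsum i)).get ⟨(i : ℕ) - offsetC c (blockOf hsum i), by
      rw [hlen]; exact hpf i⟩ with hf
  have fapply : ∀ (x : Fin m) (a : Fin t), blockOf hsum x = a →
      ∀ (hb : (x : ℕ) - offsetC c a < (L a).length),
      f x = (L a).get ⟨(x : ℕ) - offsetC c a, hb⟩ := by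
    intro x a hb hbnd
    rw [hf]
    exact list_get_congr _ _ (by rw [hb]) (by rw [hb]) _ _
  have hmemL : ∀ (a : Fin t) (x : Fin m), x ∈ L a ↔ x ∈ fiberF g a := by
    intro a x; rw [hL]; exact Finset.mem_sort _
  have hfmem : ∀ i, f i ∈ fiberF g (blockOf hsum i) := by
    intro i
    have hmem : f i ∈ L (blockOf hsum i) := by
      rw [hf]; exact List.get_mem _ _
    exact (hmemL _ _).mp hmem
  have hgf : ∀ i, g (f i) = blockOf hsum i := fun i => mem_fiberF.mp (hfmem i)
  have hinj : Function.Injective f := by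
    intro i i' hii
    have hbl : blockOf hsum i = blockOf hsum i' := by
      rw [← hgf i, ← hgf i', hii]
    have hoff : offsetC c (blockOf hsum i) = offsetC c (blockOf hsum i') := by rw [hbl]
    have e1 := fapply i (blockOf hsum i') hbl (by rw [hlen, ← hbl]; exact hpf i)
    have e2 := fapply i' (blockOf hsum i') rfl (by rw [hlen]; exact hpf i')
    have h3 : (L (blockOf hsum i')).get ⟨(i : ℕ) - offsetC c (blockOf hsum i'), _⟩
        = (L (blockOf hsum i')).get ⟨(i' : ℕ) - offsetC c (blockOf hsum i'), _⟩ :=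
      e1.symm.trans (hii.trans e2)
    have hnd : (L (blockOf hsum i')).Nodup := by
      rw [hL]; exact Finset.sort_nodup _ _
    have h4 := List.nodup_iff_injective_get.mp hnd h3
    have h5 := congrArg (fun z : Fin (L (blockOf hsum i')).length => (z : ℕ)) h4
    simp only at h5
    have hb1 := blockOf_le hsum i
    have hb2 := blockOf_le hsum i'
    apply Fin.ext
    omega
  have hbij : Function.Bijective f := Finite.injective_iff_bijective.mp hinj
  refine ⟨Equiv.ofBijective f hbij, ?_, ?_⟩
  · rw [mem_wkShuffles]
    intro a i j hij hoi hoj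
    have hbi : blockOf hsum i = a := blockOf_eq hsum hoi (by omega)
    have hbj : blockOf hsum j = a := blockOf_eq hsum (by omega) hoj
    have hiv : (i : ℕ) < (j : ℕ) := hij
    show f i < f j
    rw [fapply i a hbi (by rw [hlen, ← hbi]; exact hpf i),
      fapply j a hbj (by rw [hlen, ← hbj]; exact hpf j)]
    have hsrt : (L a).SortedLT := by rw [hL]; exact Finset.sortedLT_sort _
    apply List.SortedLT.strictMono_get hsrt
    exact Fin.mk_lt_mk.mpr (by omega)
  · funext i'
    show blockOf hsum ((Equiv.ofBijective f hbij).symm i') = g i'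
    have happ : f ((Equiv.ofBijective f hbij).symm i') = i' :=
      (Equiv.ofBijective f hbij).apply_symm_apply i'
    have hx := hgf ((Equiv.ofBijective f hbij).symm i')
    rw [happ] at hx
    exact hx.symm

theorem card_wkShuffles (hsum : ∑ i, c i = m) :
    (wkShuffles c m).card = (Gall c m).card := by
  refine Finset.card_nbij (PhiB hsum) (fun σ _ => PhiB_mem_Gall hsum σ) ?_ ?_
  · intro σ hσ σ' hσ' h
    exact PhiB_injOn hsum hσ hσ' h
  · intro g hg
    obtain ⟨σ, hσ, hPhi⟩ := PhiB_surjOn hsum (by simpa using hg)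
    exact ⟨σ, by simpa using hσ, hPhi⟩

end AuxCount

section AuxCount2

variable {t m : ℕ} {c : Fin t → ℕ}

theorem min'_congr {β : Type} [LinearOrder β] {s s' : Finset β} (h : s = s')
    (hs : s.Nonempty) (hs' : s'.Nonempty) : s.min' hs = s'.min' hs' := by
  subst h; rfl

theorem offsetC_zero {a : Fin t} (ha : (a : ℕ) = 0) : offsetC c a = 0 := by
  unfold offsetC
  rw [Finset.filter_false_of_mem, Finset.sum_empty]
  intro x _
  rw [Fin.lt_def, ha]
  omega

theorem min_fiber_PhiB (hsum : ∑ i, c i = m) {σ : Equiv.Perm (Fin m)}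
    (hσ : σ ∈ wkShuffles c m) (a : Fin t) (hca : 0 < c a)
    (hne : (fiberF (PhiB hsum σ) a).Nonempty) :
    (fiberF (PhiB hsum σ) a).min' hne
      = σ ⟨offsetC c a, by have := offsetC_add_lt' hsum a hca; omega⟩ := by
  have hval : embB hsum σ a ⟨0, hca⟩
      = σ ⟨offsetC c a, by have := offsetC_add_lt' hsum a hca; omega⟩ := by
    unfold embB
    exact congrArg σ (Fin.ext (by simp))
  apply le_antisymm
  · apply Finset.min'_le
    rw [← hval]
    exact embB_mem hsum σ a _
  · apply Finset.le_min'
    intro y hy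
    have hrange : y ∈ Set.range (embB hsum σ a) := by
      rw [embB_eq_orderEmbOfFin hsum hσ a]
      rw [Finset.range_orderEmbOfFin]
      exact hy
    obtain ⟨j, rfl⟩ := hrange
    rw [← hval]
    exact (embB_strictMono hsum hσ a).monotone (by rw [Fin.le_def]; exact Nat.zero_le _)

theorem mem_blockShuffles_iff_minsInc (hsum : ∑ i, c i = m) (hpos : ∀ a, 0 < c a)
    {σ : Equiv.Perm (Fin m)} (hσ : σ ∈ wkShuffles c m) :
    σ ∈ blockShuffles c m ↔ minsInc (PhiB hsum σ) := by
  rw [mem_blockShuffles']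
  constructor
  · rintro ⟨-, h2⟩
    intro a b hab ha hb
    rw [min_fiber_PhiB hsum hσ a (hpos a) ha, min_fiber_PhiB hsum hσ b (hpos b) hb]
    exact h2 a b hab _ _ rfl rfl
  · intro hm
    refine ⟨mem_wkShuffles.mp hσ, ?_⟩
    intro a b hab i j hi hj
    have hnea : (fiberF (PhiB hsum σ) a).Nonempty := by
      rw [← Finset.card_pos, card_fiber_PhiB]; exact hpos a
    have hneb : (fiberF (PhiB hsum σ) b).Nonempty := by
      rw [← Finset.card_pos, card_fiber_PhiB]; exact hpos b
    have := hm a b hab hnea hneb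
    rw [min_fiber_PhiB hsum hσ a (hpos a) hnea, min_fiber_PhiB hsum hσ b (hpos b) hneb] at this
    have hia : i = ⟨offsetC c a, by have := offsetC_add_lt' hsum a (hpos a); omega⟩ :=
      Fin.ext hi
    have hjb : j = ⟨offsetC c b, by have := offsetC_add_lt' hsum b (hpos b); omega⟩ :=
      Fin.ext hj
    rw [hia, hjb]
    exact this

theorem blockShuffles_subset_wk {σ : Equiv.Perm (Fin m)} (hσ : σ ∈ blockShuffles c m) :
    σ ∈ wkShuffles c m :=
  mem_wkShuffles.mpr (mem_blockShuffles'.mp hσ).1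

theorem card_blockShuffles (hsum : ∑ i, c i = m) (hpos : ∀ a, 0 < c a) :
    (blockShuffles c m).card = (Gmin c m).card := by
  refine Finset.card_nbij (PhiB hsum) ?_ ?_ ?_
  · intro σ hσ
    rw [Finset.mem_coe, mem_Gmin]
    exact ⟨PhiB_mem_Gall hsum σ,
      (mem_blockShuffles_iff_minsInc hsum hpos (blockShuffles_subset_wk hσ)).mp hσ⟩
  · intro σ hσ σ' hσ' h
    exact PhiB_injOn hsum (blockShuffles_subset_wk hσ) (blockShuffles_subset_wk hσ') h
  · intro g hg
    rw [Finset.mem_coe, mem_Gmin] at hg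
    obtain ⟨σ, hσ, hPhi⟩ := PhiB_surjOn hsum hg.1
    refine ⟨σ, Finset.mem_coe.mpr ?_, hPhi⟩
    rw [mem_blockShuffles_iff_minsInc hsum hpos hσ, hPhi]
    exact hg.2

theorem card_fiber_perms (hsum : ∑ i, c i = m) {g : Fin m → Fin t} (hg : g ∈ Gall c m) :
    (Finset.univ.filter (fun σ : Equiv.Perm (Fin m) => PhiB hsum σ = g)).card
      = ∏ a, (c a).factorial := by
  classical
  have hcard : ∀ a, (fiberF g a).card = c a := mem_Gall.mp hg
  have hpf : ∀ i : Fin m, (i : ℕ) - offsetC c (blockOf hsum i) < c (blockOf hsum i) := by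
    intro i
    have h1 := blockOf_le hsum i
    have h2 := blockOf_lt hsum i
    omega
  set F : (∀ a, Equiv.Perm (Fin (c a))) → Fin m → Fin m := fun π i =>
    (fiberF g (blockOf hsum i)).orderEmbOfFin (hcard _)
      (π (blockOf hsum i) ⟨(i : ℕ) - offsetC c (blockOf hsum i), hpf i⟩) with hF
  have Fapply : ∀ (π : ∀ a, Equiv.Perm (Fin (c a))) (x : Fin m) (a : Fin t)
      (hb : blockOf hsum x = a) (j : Fin (c a)), ((j : ℕ) = (x : ℕ) - offsetC c a) →
      F π x = (fiberF g a).orderEmbOfFin (hcard a) (π a j) := by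
    intro π x a hb j hj
    subst hb
    have hj' : (⟨(x : ℕ) - offsetC c (blockOf hsum x), hpf x⟩ : Fin (c (blockOf hsum x))) = j :=
      Fin.ext hj.symm
    rw [hF]
    simp only
    rw [hj']
  have Fmem : ∀ π i, F π i ∈ fiberF g (blockOf hsum i) := by
    intro π i
    rw [hF]
    exact Finset.orderEmbOfFin_mem _ _ _
  have gF : ∀ π i, g (F π i) = blockOf hsum i := fun π i => mem_fiberF.mp (Fmem π i)
  have Finj : ∀ π, Function.Injective (F π) := by
    intro π i i' heq
    have hbl : blockOf hsum i = blockOf hsum i' := by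
      rw [← gF π i, ← gF π i', heq]
    have hoff : offsetC c (blockOf hsum i) = offsetC c (blockOf hsum i') := by rw [hbl]
    have e1 := Fapply π i (blockOf hsum i') hbl
      ⟨(i : ℕ) - offsetC c (blockOf hsum i'), by rw [← hbl]; exact hpf i⟩ rfl
    have e2 := Fapply π i' (blockOf hsum i') rfl
      ⟨(i' : ℕ) - offsetC c (blockOf hsum i'), hpf i'⟩ rfl
    have h3 := e1.symm.trans (heq.trans e2)
    have h4 := ((fiberF g (blockOf hsum i')).orderEmbOfFin (hcard _)).injective h3
    have h5 := (π (blockOf hsum i')).injective h4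
    have h6 := congrArg (fun z : Fin (c (blockOf hsum i')) => (z : ℕ)) h5
    simp only at h6
    have hb1 := blockOf_le hsum i
    have hb2 := blockOf_le hsum i'
    apply Fin.ext
    omega
  have Fbij : ∀ π, Function.Bijective (F π) := fun π => Finite.injective_iff_bijective.mp (Finj π)
  have hPhiF : ∀ π, PhiB hsum (Equiv.ofBijective (F π) (Fbij π)) = g := by
    intro π
    funext i'
    show blockOf hsum ((Equiv.ofBijective (F π) (Fbij π)).symm i') = g i'
    have happ := (Equiv.ofBijective (F π) (Fbij π)).apply_symm_apply i'
    have hx := gF π ((Equiv.ofBijective (F π) (Fbij π)).symm i')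
    rw [show F π ((Equiv.ofBijective (F π) (Fbij π)).symm i')
        = (Equiv.ofBijective (F π) (Fbij π)) ((Equiv.ofBijective (F π) (Fbij π)).symm i')
        from rfl, happ] at hx
    exact hx.symm
  have : (Fintype.piFinset (fun a : Fin t => (Finset.univ : Finset (Equiv.Perm (Fin (c a)))))).card
      = (Finset.univ.filter (fun σ : Equiv.Perm (Fin m) => PhiB hsum σ = g)).card := by
    refine Finset.card_bij (fun π _ => Equiv.ofBijective (F π) (Fbij π)) ?_ ?_ ?_
    · intro π _
      rw [Finset.mem_filter]
      exact ⟨Finset.mem_univ _, hPhiF π⟩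
    · intro π hπ π' hπ' heq
      refine funext fun a => Equiv.ext fun j => ?_
      have hx : blockOf hsum ⟨offsetC c a + (j : ℕ), offsetC_add_lt' hsum a j.2⟩ = a :=
        blockOf_mk hsum a j.2
      have e1 := Fapply π ⟨offsetC c a + (j : ℕ), offsetC_add_lt' hsum a j.2⟩ a hx j
        (by simp)
      have e2 := Fapply π' ⟨offsetC c a + (j : ℕ), offsetC_add_lt' hsum a j.2⟩ a hx j
        (by simp)
      have hFF : F π ⟨offsetC c a + (j : ℕ), offsetC_add_lt' hsum a j.2⟩
          = F π' ⟨offsetC c a + (j : ℕ), offsetC_add_lt' hsum a j.2⟩ := by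
        have := congrArg (fun (e : Equiv.Perm (Fin m)) =>
          e ⟨offsetC c a + (j : ℕ), offsetC_add_lt' hsum a j.2⟩) heq
        exact this
      have h3 := e1.symm.trans (hFF.trans e2)
      exact ((fiberF g a).orderEmbOfFin (hcard a)).injective h3
    · intro σ hσ
      rw [Finset.mem_filter] at hσ
      have hPhi := hσ.2
      have hmem : ∀ (a : Fin t) (j : Fin (c a)),
          σ ⟨offsetC c a + (j : ℕ), offsetC_add_lt' hsum a j.2⟩ ∈ fiberF g a := by
        intro a j
        rw [mem_fiberF, ← hPhi, PhiB, Equiv.symm_apply_apply]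
        exact blockOf_mk hsum a j.2
      set pa : ∀ a : Fin t, Fin (c a) → Fin (c a) := fun a j =>
        ((fiberF g a).orderIsoOfFin (hcard a)).symm
          ⟨σ ⟨offsetC c a + (j : ℕ), offsetC_add_lt' hsum a j.2⟩, hmem a j⟩ with hpa
      have hpainj : ∀ a, Function.Injective (pa a) := by
        intro a j j' hjj
        rw [hpa] at hjj
        simp only at hjj
        have := congrArg ((fiberF g a).orderIsoOfFin (hcard a)) hjj
        rw [OrderIso.apply_symm_apply, OrderIso.apply_symm_apply] at this
        have hval := congrArg (fun z : {x // x ∈ fiberF g a} => (z : Fin m)) this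
        simp only at hval
        have := σ.injective hval
        have hvv := congrArg (fun z : Fin m => (z : ℕ)) this
        simp only at hvv
        apply Fin.ext
        omega
      set π : ∀ a : Fin t, Equiv.Perm (Fin (c a)) := fun a =>
        Equiv.ofBijective (pa a) (Finite.injective_iff_bijective.mp (hpainj a)) with hπ
      refine ⟨π, Fintype.mem_piFinset.mpr (fun a => Finset.mem_univ _), ?_⟩
      apply Equiv.ext
      intro x
      show F π x = σ x
      have h1 := blockOf_le hsum x
      have h2 := blockOf_lt hsum x
      have hxx : (⟨offsetC c (blockOf hsum x) + ((x : ℕ) - offsetC c (blockOf hsum x)),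
          offsetC_add_lt' hsum _ (hpf x)⟩ : Fin m) = x := Fin.ext (by simp; omega)
      calc F π x = (fiberF g (blockOf hsum x)).orderEmbOfFin (hcard _)
            (pa (blockOf hsum x) ⟨(x : ℕ) - offsetC c (blockOf hsum x), hpf x⟩) := rfl
        _ = σ x := by
            rw [hpa]
            simp only
            rw [show ∀ (s : Finset (Fin m)) (h : s.card = c (blockOf hsum x))
                (y : {z // z ∈ s}), s.orderEmbOfFin h (((s.orderIsoOfFin h)).symm y) = (y : Fin m)
              from fun s h y => by
                rw [← Finset.coe_orderIsoOfFin_apply, OrderIso.apply_symm_apply]]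
            exact congrArg σ (Fin.ext (by simp; omega))
  rw [← this]
  rw [Fintype.card_piFinset]
  apply Finset.prod_congr rfl
  intro a _
  rw [Finset.card_univ]
  rw [Fintype.card_perm]
  rw [Fintype.card_fin]

theorem card_Gall_mul_factorials (hsum : ∑ i, c i = m) :
    (Gall c m).card * ∏ a, (c a).factorial = m.factorial := by
  classical
  have h1 : (Finset.univ : Finset (Equiv.Perm (Fin m))).card = m.factorial := by
    rw [Finset.card_univ, Fintype.card_perm, Fintype.card_fin]
  rw [← h1]
  rw [Finset.card_eq_sum_card_fiberwise (f := PhiB hsum) (t := Gall c m)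
    (fun σ _ => PhiB_mem_Gall hsum σ)]
  rw [Finset.sum_congr rfl (fun g hg => card_fiber_perms hsum hg)]
  rw [Finset.sum_const, smul_eq_mul]

end AuxCount2

section AuxCount3

variable {t m : ℕ} {c : Fin t → ℕ}

theorem mem_compositions' {c : Fin t → ℕ} :
    c ∈ compositions t m ↔ (∀ i, 1 ≤ c i) ∧ ∑ i, c i = m := by
  unfold compositions
  rw [Finset.mem_filter, Fintype.mem_piFinset]
  constructor
  · rintro ⟨-, h⟩; exact h
  · rintro ⟨h1, h2⟩
    refine ⟨fun i => Finset.mem_range.mpr ?_, h1, h2⟩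
    have : c i ≤ ∑ j, c j := Finset.single_le_sum (fun j _ => Nat.zero_le _) (Finset.mem_univ i)
    omega

theorem fiberF_comp {g : Fin m → Fin t} (ρ : Equiv.Perm (Fin t)) (a : Fin t) :
    fiberF (fun i => ρ (g i)) a = fiberF g (ρ.symm a) := by
  ext i
  rw [mem_fiberF, mem_fiberF]
  exact (Equiv.apply_eq_iff_eq_symm_apply ρ)

theorem Gall_decomp (hsum : ∑ i, c i = m) (hpos : ∀ a, 0 < c a) :
    Gall c m = Finset.univ.biUnion
      (fun ρ : Equiv.Perm (Fin t) => (Gmin (c ∘ ρ) m).image (fun g i => ρ (g i))) := by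
  ext h
  rw [Finset.mem_biUnion]
  constructor
  · intro hh
    have hcard : ∀ a, (fiberF h a).card = c a := mem_Gall.mp hh
    have hne : ∀ a, (fiberF h a).Nonempty := by
      intro a; rw [← Finset.card_pos, hcard]; exact hpos a
    set u : Fin t → Fin m := fun a => (fiberF h a).min' (hne a) with hu
    have hval : ∀ a, h (u a) = a := by
      intro a; exact mem_fiberF.mp (Finset.min'_mem _ _)
    have huinj : Function.Injective u := by
      intro a b hab
      rw [← hval a, ← hval b, hab]
    set ρ : Equiv.Perm (Fin t) := Tuple.sort u with hρ
    have hmono : Monotone (u ∘ ρ) := Tuple.monotone_sort u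
    have hstrict : StrictMono (u ∘ ρ) :=
      hmono.strictMono_of_injective (huinj.comp ρ.injective)
    refine ⟨ρ, Finset.mem_univ _, ?_⟩
    rw [Finset.mem_image]
    refine ⟨fun i => ρ.symm (h i), ?_, ?_⟩
    · rw [mem_Gmin]
      have hfib : ∀ a, fiberF (fun i => ρ.symm (h i)) a = fiberF h (ρ a) := by
        intro a
        rw [fiberF_comp (g := h) ρ.symm a, Equiv.symm_symm]
      constructor
      · rw [mem_Gall]
        intro a
        rw [hfib a, hcard]
        rfl
      · intro a b hab ha hb
        have := hstrict hab
        calc (fiberF (fun i => ρ.symm (h i)) a).min' ha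
            = u (ρ a) := min'_congr (hfib a) ha (hne (ρ a))
          _ < u (ρ b) := this
          _ = (fiberF (fun i => ρ.symm (h i)) b).min' hb := (min'_congr (hfib b) hb _).symm
    · funext i
      simp
  · rintro ⟨ρ, -, hh⟩
    rw [Finset.mem_image] at hh
    obtain ⟨g, hg, rfl⟩ := hh
    rw [mem_Gall]
    intro a
    rw [fiberF_comp ρ a]
    have := mem_Gall.mp (mem_Gmin.mp hg).1 (ρ.symm a)
    rw [this]
    simp

theorem Gall_decomp_disjoint (hsum : ∑ i, c i = m) (hpos : ∀ a, 0 < c a) :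
    ∀ ρ ∈ (Finset.univ : Finset (Equiv.Perm (Fin t))), ∀ ρ' ∈ Finset.univ, ρ ≠ ρ' →
      Disjoint ((Gmin (c ∘ ρ) m).image (fun g i => ρ (g i)))
        ((Gmin (c ∘ ρ') m).image (fun g i => ρ' (g i))) := by
  intro ρ _ ρ' _ hne'
  rw [Finset.disjoint_left]
  intro h hmem hmem'
  rw [Finset.mem_image] at hmem hmem'
  obtain ⟨g, hg, hgh⟩ := hmem
  obtain ⟨g', hg', hgh'⟩ := hmem'
  apply hne'
  -- fibers of h all have card c a
  have hfibp : ∀ (ρ₀ : Equiv.Perm (Fin t)) (g₀ : Fin m → Fin t), g₀ ∈ Gmin (c ∘ ρ₀) m →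
      (fun i => ρ₀ (g₀ i)) = h → ∀ a, fiberF h a = fiberF g₀ (ρ₀.symm a) := by
    intro ρ₀ g₀ hg₀ hgh₀ a
    rw [← hgh₀, fiberF_comp]
  have hfibρ := hfibp ρ g hg hgh
  have hfibρ' := hfibp ρ' g' hg' hgh'
  have hcardh : ∀ a, (fiberF h a).card = c a := by
    intro a
    rw [hfibρ a]
    have := mem_Gall.mp (mem_Gmin.mp hg).1 (ρ.symm a)
    rw [this]
    simp
  have hneh : ∀ a, (fiberF h a).Nonempty := by
    intro a; rw [← Finset.card_pos, hcardh]; exact hpos a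
  set u : Fin t → Fin m := fun a => (fiberF h a).min' (hneh a) with hu
  have hval : ∀ a, h (u a) = a := fun a => mem_fiberF.mp (Finset.min'_mem _ _)
  have huinj : Function.Injective u := by
    intro a b hab; rw [← hval a, ← hval b, hab]
  have hstrict : ∀ (ρ₀ : Equiv.Perm (Fin t)) (g₀ : Fin m → Fin t) (hg₀ : g₀ ∈ Gmin (c ∘ ρ₀) m),
      (fun i => ρ₀ (g₀ i)) = h → StrictMono (u ∘ ρ₀) := by
    intro ρ₀ g₀ hg₀ hgh₀
    intro a b hab
    have hfib := hfibp ρ₀ g₀ hg₀ hgh₀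
    have hfib' : ∀ a, fiberF g₀ a = fiberF h (ρ₀ a) := by
      intro a
      rw [hfib (ρ₀ a)]
      simp
    have hneg : ∀ a, (fiberF g₀ a).Nonempty := by
      intro a; rw [hfib' a]; exact hneh _
    have := (mem_Gmin.mp hg₀).2 a b hab (hneg a) (hneg b)
    calc u (ρ₀ a) = (fiberF g₀ a).min' (hneg a) := (min'_congr (hfib' a) _ _).symm
      _ < (fiberF g₀ b).min' (hneg b) := this
      _ = u (ρ₀ b) := min'_congr (hfib' b) _ _
  have hs1 := hstrict ρ g hg hgh
  have hs2 := hstrict ρ' g' hg' hgh'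
  have hcardim : (Finset.univ.image u).card = t := by
    rw [Finset.card_image_of_injective _ huinj, Finset.card_univ, Fintype.card_fin]
  have he1 : (u ∘ ρ) = (Finset.univ.image u).orderEmbOfFin hcardim :=
    Finset.orderEmbOfFin_unique hcardim
      (fun x => Finset.mem_image_of_mem u (Finset.mem_univ _)) hs1
  have he2 : (u ∘ ρ') = (Finset.univ.image u).orderEmbOfFin hcardim :=
    Finset.orderEmbOfFin_unique hcardim
      (fun x => Finset.mem_image_of_mem u (Finset.mem_univ _)) hs2
  apply Equiv.ext
  intro x
  apply huinj
  exact (congrFun (he1.trans he2.symm) x)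

theorem sum_card_Gmin (hsum : ∑ i, c i = m) (hpos : ∀ a, 0 < c a) :
    ∑ ρ : Equiv.Perm (Fin t), (Gmin (c ∘ ρ) m).card = (Gall c m).card := by
  rw [Gall_decomp hsum hpos, Finset.card_biUnion (Gall_decomp_disjoint hsum hpos)]
  apply Finset.sum_congr rfl
  intro ρ _
  rw [Finset.card_image_of_injective]
  intro g g' hgg
  funext i
  have := congrFun hgg i
  simp only at this
  exact ρ.injective this

theorem count_key (hc : c ∈ compositions t m) :
    (∑ ρ : Equiv.Perm (Fin t), (blockShuffles (c ∘ ρ) m).card) * (∏ a, (c a).factorial)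
      = m.factorial := by
  obtain ⟨hpos, hsum⟩ := mem_compositions'.mp hc
  have hstep : ∀ ρ : Equiv.Perm (Fin t),
      (blockShuffles (c ∘ ρ) m).card = (Gmin (c ∘ ρ) m).card := by
    intro ρ
    exact card_blockShuffles (by simp only [Function.comp]; rw [Equiv.sum_comp ρ c]; exact hsum) (fun a => hpos (ρ a))
  rw [Finset.sum_congr rfl (fun ρ _ => hstep ρ), sum_card_Gmin hsum hpos,
    card_Gall_mul_factorials hsum]

theorem card_shuffles {p : ℕ} (hpm : p ≤ m) : (shuffles p m).card = m.choose p := by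
  set c2 : Fin 2 → ℕ := ![p, m - p] with hc2
  have hsum2 : ∑ a, c2 a = m := by
    rw [Fin.sum_univ_two]
    simp [hc2]
    omega
  have hoff0 : offsetC c2 0 = 0 := offsetC_zero rfl
  have hoff1 : offsetC c2 1 = p := by
    rw [offsetC_mono_succ (a := 0) (b := 1) rfl, hoff0]
    simp [hc2]
  have hval0 : c2 0 = p := rfl
  have hval1 : c2 1 = m - p := rfl
  have hset : shuffles p m = wkShuffles c2 m := by
    ext σ
    rw [mem_wkShuffles]
    unfold shuffles
    rw [Finset.mem_filter]
    constructor
    · rintro ⟨-, h1, h2⟩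
      intro a
      match a with
      | 0 =>
        intro i j hij _ hj
        exact h1 i j hij (by rw [hoff0, hval0] at hj; omega)
      | 1 =>
        intro i j hij hi _
        exact h2 i j hij (by rw [hoff1] at hi; omega)
    · intro h
      refine ⟨Finset.mem_univ _, ?_, ?_⟩
      · intro i j hij hj
        exact h 0 i j hij (by rw [hoff0]; omega) (by rw [hoff0, hval0]; omega)
      · intro i j hij hi
        refine h 1 i j hij (by rw [hoff1]; omega) ?_
        rw [hoff1, hval1]
        have := j.2
        omega
  rw [hset, card_wkShuffles hsum2]
  have hkey := card_Gall_mul_factorials hsum2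
  have hprod : ∏ a, (c2 a).factorial = p.factorial * (m - p).factorial := by
    rw [Fin.prod_univ_two, hval0, hval1]
  rw [hprod] at hkey
  have hch := Nat.choose_mul_factorial_mul_factorial hpm
  have hpos : 0 < p.factorial * (m - p).factorial :=
    Nat.mul_pos p.factorial_pos (m - p).factorial_pos
  apply Nat.eq_of_mul_eq_mul_right hpos
  rw [hkey, ← hch]
  ring

end AuxCount3

section AuxAlg

variable {k : Type} [Field k] [CharZero k] {L L' : Type} [AddCommGroup L] [Module k L]
  [AddCommGroup L'] [Module k L']

theorem filt_one_mem (A : FSLie k L) (x : L) : x ∈ A.filt 1 := by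
  rw [A.filt_one]; trivial

theorem filt_zero_mem (A : FSLie k L) (x : L) : x ∈ A.filt 0 := by
  rw [A.filt_zero]; trivial

theorem br_filt_all (A : FSLie k L) (t : ℕ) (v : Fin t → L) (w : Fin t → ℕ)
    (hv : ∀ i, v i ∈ A.filt (w i)) : A.br t v ∈ A.filt (∑ i, w i) := by
  match t with
  | 0 =>
    rw [A.br_zero]
    exact Submodule.zero_mem _
  | 1 =>
    have hveq : v = ![v 0] := by
      funext i
      have : i = 0 := Subsingleton.elim i 0
      rw [this]
      rfl
    have hsum : ∑ i, w i = w 0 := by simp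
    rw [hveq, hsum]
    exact A.filt_diff (w 0) (v 0) (hv 0)
  | (n + 2) =>
    exact A.filt_br (n + 2) v w (by omega) hv

theorem curvSeries_mem_filt (A : FSLie k L) (α : L) (i : ℕ) :
    curvSeries k A α i ∈ A.filt i := by
  unfold curvSeries
  rcases Nat.eq_zero_or_pos i with rfl | hi
  · simp
  · rw [if_neg (by omega)]
    apply Submodule.smul_mem
    have := br_filt_all A i (fun _ => α) (fun _ => 1) (fun _ => filt_one_mem A α)
    simpa using this

theorem curvSeries_mem_gr (A : FSLie k L) {α : L} (hα : α ∈ A.gr 0) (i : ℕ) :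
    curvSeries k A α i ∈ A.gr 1 := by
  unfold curvSeries
  rcases Nat.eq_zero_or_pos i with rfl | hi
  · simp
  · rw [if_neg (by omega)]
    apply Submodule.smul_mem
    have := A.br_degree i (fun _ => α) (fun _ => 0) (fun _ => hα)
    simpa using this

theorem pushSeries_mem_filt (A : FSLie k L) (B : FSLie k L') (F : InfMor k A B) (α : L)
    (j : ℕ) : pushSeries k F.T α j ∈ B.filt j := by
  unfold pushSeries
  rcases Nat.eq_zero_or_pos j with rfl | hj
  · simp
  · rw [if_neg (by omega)]
    apply Submodule.smul_mem
    have := F.T_filt j (fun _ => α) (fun _ => 1) (fun _ => filt_one_mem A α)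
    simpa using this

theorem coeff_choose {m p : ℕ} (hpm : p ≤ m) :
    (m.factorial : k)⁻¹ * (m.choose p : k)
      = (p.factorial : k)⁻¹ * ((m - p).factorial : k)⁻¹ := by
  have hnat := Nat.choose_mul_factorial_mul_factorial hpm
  have hcast : (m.choose p : k) * (p.factorial : k) * ((m - p).factorial : k)
      = (m.factorial : k) := by exact_mod_cast congrArg (Nat.cast : ℕ → k) hnat
  have h1 : (p.factorial : k) ≠ 0 := Nat.cast_ne_zero.mpr p.factorial_ne_zero
  have h2 : ((m - p).factorial : k) ≠ 0 := Nat.cast_ne_zero.mpr (m - p).factorial_ne_zero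
  have h3 : (m.factorial : k) ≠ 0 := Nat.cast_ne_zero.mpr m.factorial_ne_zero
  field_simp
  linear_combination hcast

variable (A : FSLie k L) (B : FSLie k L') (F : InfMor k A B) (α : L)

theorem compLHS_const (m : ℕ) :
    compLHS k A F.T (fun _ : Fin m => α) (fun _ => (0 : ℤ))
      = ∑ p ∈ Finset.Icc 1 m, (m.choose p) •
          F.T (m - p + 1) (Fin.cons (A.br p (fun _ => α)) (fun _ : Fin (m - p) => α)) := by
  unfold compLHS
  rw [← Finset.sum_attach (Finset.Icc 1 m) (fun p => (m.choose p) •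
    F.T (m - p + 1) (Fin.cons (A.br p (fun _ => α)) (fun _ : Fin (m - p) => α)))]
  apply Finset.sum_congr rfl
  intro p _
  have hpm : p.1 ≤ m := (Finset.mem_Icc.mp p.2).2
  calc ∑ σ ∈ shuffles p.1 m,
        shTerm k A.br F.T (fun _ => α) (fun _ => 0) p.1 (Finset.mem_Icc.mp p.2).2 σ
      = ∑ _σ ∈ shuffles p.1 m,
          F.T (m - p.1 + 1) (Fin.cons (A.br p.1 (fun _ => α)) (fun _ : Fin (m - p.1) => α)) := by
        apply Finset.sum_congr rfl
        intro σ _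
        unfold shTerm
        rw [koszulSign_zero, one_smul]
        rfl
    _ = (shuffles p.1 m).card •
          F.T (m - p.1 + 1) (Fin.cons (A.br p.1 (fun _ => α)) (fun _ : Fin (m - p.1) => α)) :=
        Finset.sum_const _
    _ = (m.choose p.1) •
          F.T (m - p.1 + 1) (Fin.cons (A.br p.1 (fun _ => α)) (fun _ : Fin (m - p.1) => α)) := by
        rw [card_shuffles hpm]

theorem compRHS_const (m : ℕ) :
    compRHS k B F.T (fun _ : Fin m => α) (fun _ => (0 : ℤ))
      = ∑ t ∈ Finset.Icc 1 m, ∑ c ∈ compositions t m,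
          ((blockShuffles c m).card : k) • B.br t (fun a => F.T (c a) (fun _ => α)) := by
  unfold compRHS
  rw [← Finset.sum_attach (Finset.Icc 1 m) (fun t => ∑ c ∈ compositions t m,
    ((blockShuffles c m).card : k) • B.br t (fun a => F.T (c a) (fun _ => α)))]
  apply Finset.sum_congr rfl
  intro t _
  rw [← Finset.sum_attach (compositions t.1 m) (fun c =>
    ((blockShuffles c m).card : k) • B.br t.1 (fun a => F.T (c a) (fun _ => α)))]
  apply Finset.sum_congr rfl
  intro c _
  calc ∑ τ ∈ blockShuffles c.1 m, koszulSign k τ (fun _ => (0:ℤ)) •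
        B.br t.1 (fun a => F.T (c.1 a) (fun j => (fun _ : Fin m => α) (blockIdx c.2 τ a j)))
      = ∑ _τ ∈ blockShuffles c.1 m, B.br t.1 (fun a => F.T (c.1 a) (fun _ => α)) := by
        apply Finset.sum_congr rfl
        intro τ _
        rw [koszulSign_zero, one_smul]
    _ = (blockShuffles c.1 m).card • B.br t.1 (fun a => F.T (c.1 a) (fun _ => α)) :=
        Finset.sum_const _
    _ = ((blockShuffles c.1 m).card : k) • B.br t.1 (fun a => F.T (c.1 a) (fun _ => α)) := by
        rw [Nat.cast_smul_eq_nsmul]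

theorem G_comp_perm (hα : α ∈ A.gr 0) (t : ℕ) (c : Fin t → ℕ) (ρ : Equiv.Perm (Fin t)) :
    B.br t (fun a => F.T ((c ∘ ρ) a) (fun _ => α)) = B.br t (fun a => F.T (c a) (fun _ => α)) := by
  have hdeg : ∀ a, (fun a => F.T (c a) (fun _ : Fin (c a) => α)) a ∈ B.gr ((fun _ => (0:ℤ)) a) := by
    intro a
    have := F.T_degree (c a) (fun _ => α) (fun _ => 0) (fun _ => hα)
    simpa using this
  have heq : (fun a => F.T ((c ∘ ρ) a) (fun _ : Fin ((c ∘ ρ) a) => α))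
      = (fun a => F.T (c a) (fun _ : Fin (c a) => α)) ∘ ρ := rfl
  rw [heq, B.br_symm t ρ _ (fun _ => 0) hdeg, koszulSign_zero, one_smul]

theorem mem_compositions_comp {t m : ℕ} {c : Fin t → ℕ} (ρ : Equiv.Perm (Fin t))
    (hc : c ∈ compositions t m) : c ∘ ρ ∈ compositions t m := by
  obtain ⟨h1, h2⟩ := mem_compositions'.mp hc
  refine mem_compositions'.mpr ⟨fun i => h1 (ρ i), ?_⟩
  simp only [Function.comp]
  rw [Equiv.sum_comp ρ c]
  exact h2

theorem core_step (hα : α ∈ A.gr 0) (m t : ℕ) :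
    (m.factorial : k)⁻¹ • (∑ c ∈ compositions t m,
        ((blockShuffles c m).card : k) • B.br t (fun a => F.T (c a) (fun _ => α)))
      = ∑ c ∈ compositions t m,
          ((t.factorial : k)⁻¹ * ∏ a, ((c a).factorial : k)⁻¹) •
            B.br t (fun a => F.T (c a) (fun _ => α)) := by
  set GG : (Fin t → ℕ) → L' := fun c => B.br t (fun a => F.T (c a) (fun _ => α)) with hGG
  have hGsym : ∀ (ρ : Equiv.Perm (Fin t)) (c : Fin t → ℕ), GG (c ∘ ρ) = GG c := by
    intro ρ c
    exact G_comp_perm A B F α hα t c ρ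
  have hprodne : ∀ c : Fin t → ℕ, (∏ a, ((c a).factorial : k)) ≠ 0 := by
    intro c
    apply Finset.prod_ne_zero_iff.mpr
    intro a _
    exact Nat.cast_ne_zero.mpr (c a).factorial_ne_zero
  have key : ∀ c ∈ compositions t m, (∑ ρ : Equiv.Perm (Fin t),
      ((blockShuffles (c ∘ ρ) m).card : k)) = (m.factorial : k) * (∏ a, ((c a).factorial : k))⁻¹ := by
    intro c hc
    have hnat := count_key hc
    have hcast : (∑ ρ : Equiv.Perm (Fin t), ((blockShuffles (c ∘ ρ) m).card : k))
        * (∏ a, ((c a).factorial : k)) = (m.factorial : k) := by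
      exact_mod_cast congrArg (Nat.cast : ℕ → k) hnat
    rw [eq_mul_inv_iff_mul_eq₀ (hprodne c)]
    exact hcast
  have hreindex : ∀ ρ : Equiv.Perm (Fin t),
      ∑ c ∈ compositions t m, ((blockShuffles c m).card : k) • GG c
        = ∑ c ∈ compositions t m, ((blockShuffles (c ∘ ρ) m).card : k) • GG (c ∘ ρ) := by
    intro ρ
    refine Finset.sum_nbij' (fun c => c ∘ ρ.symm) (fun c => c ∘ ρ) ?_ ?_ ?_ ?_ ?_
    · intro c hc; exact mem_compositions_comp ρ.symm hc
    · intro c hc; exact mem_compositions_comp ρ hc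
    · intro c _; funext x; simp
    · intro c _; funext x; simp
    · intro c _
      have hcomp : (c ∘ ⇑ρ.symm) ∘ ⇑ρ = c := by funext x; simp
      rw [hcomp]
  have tfacne : (t.factorial : k) ≠ 0 := Nat.cast_ne_zero.mpr t.factorial_ne_zero
  have mfacne : (m.factorial : k) ≠ 0 := Nat.cast_ne_zero.mpr m.factorial_ne_zero
  have main : (t.factorial : k) • (∑ c ∈ compositions t m,
      ((blockShuffles c m).card : k) • GG c)
      = ∑ c ∈ compositions t m,
          ((m.factorial : k) * (∏ a, ((c a).factorial : k))⁻¹) • GG c := by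
    calc (t.factorial : k) • (∑ c ∈ compositions t m, ((blockShuffles c m).card : k) • GG c)
        = ∑ _ρ : Equiv.Perm (Fin t),
            ∑ c ∈ compositions t m, ((blockShuffles c m).card : k) • GG c := by
          rw [Finset.sum_const, Finset.card_univ, Fintype.card_perm, Fintype.card_fin,
            ← Nat.cast_smul_eq_nsmul k]
      _ = ∑ ρ : Equiv.Perm (Fin t),
            ∑ c ∈ compositions t m, ((blockShuffles (c ∘ ρ) m).card : k) • GG (c ∘ ρ) :=
          Finset.sum_congr rfl (fun ρ _ => hreindex ρ)
      _ = ∑ ρ : Equiv.Perm (Fin t),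
            ∑ c ∈ compositions t m, ((blockShuffles (c ∘ ρ) m).card : k) • GG c := by
          apply Finset.sum_congr rfl
          intro ρ _
          apply Finset.sum_congr rfl
          intro c _
          rw [hGsym ρ c]
      _ = ∑ c ∈ compositions t m,
            (∑ ρ : Equiv.Perm (Fin t), ((blockShuffles (c ∘ ρ) m).card : k)) • GG c := by
          rw [Finset.sum_comm]
          apply Finset.sum_congr rfl
          intro c _
          rw [Finset.sum_smul]
      _ = ∑ c ∈ compositions t m,
            ((m.factorial : k) * (∏ a, ((c a).factorial : k))⁻¹) • GG c :=
          Finset.sum_congr rfl (fun c hc => by rw [key c hc])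
  have hcancel : ∀ x y : L', (t.factorial : k) • x = (t.factorial : k) • y → x = y := by
    intro x y h
    have := congrArg (fun z => ((t.factorial : k))⁻¹ • z) h
    simpa [smul_smul, inv_mul_cancel₀ tfacne] using this
  apply hcancel
  calc (t.factorial : k) • ((m.factorial : k)⁻¹
        • ∑ c ∈ compositions t m, ((blockShuffles c m).card : k) • GG c)
      = (m.factorial : k)⁻¹ • ((t.factorial : k)
          • ∑ c ∈ compositions t m, ((blockShuffles c m).card : k) • GG c) := by
        rw [smul_comm]
    _ = (m.factorial : k)⁻¹ • ∑ c ∈ compositions t m,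
          ((m.factorial : k) * (∏ a, ((c a).factorial : k))⁻¹) • GG c := by rw [main]
    _ = ∑ c ∈ compositions t m, (∏ a, ((c a).factorial : k))⁻¹ • GG c := by
        rw [Finset.smul_sum]
        apply Finset.sum_congr rfl
        intro c _
        rw [smul_smul, ← mul_assoc, inv_mul_cancel₀ mfacne, one_mul]
    _ = (t.factorial : k) • ∑ c ∈ compositions t m,
          ((t.factorial : k)⁻¹ * ∏ a, ((c a).factorial : k)⁻¹) • GG c := by
        rw [Finset.smul_sum]
        apply Finset.sum_congr rfl
        intro c _
        rw [smul_smul, ← mul_assoc, mul_inv_cancel₀ tfacne, one_mul, ← Finset.prod_inv_distrib]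

end AuxAlg

section AuxSums

variable {β : Type} [AddCommMonoid β]

theorem sum_triangle_reindex (M₁ : ℕ) (h : ℕ → ℕ → β) :
    ∑ m ∈ Finset.range (M₁ + 1), ∑ p ∈ Finset.Icc 1 m, h p (m - p)
      = ∑ r ∈ Finset.range M₁, ∑ p ∈ Finset.Icc 1 (M₁ - r), h p r := by
  have e1 : ∑ m ∈ Finset.range (M₁ + 1), ∑ p ∈ Finset.Icc 1 m, h p (m - p)
      = ∑ q ∈ (Finset.range (M₁ + 1) ×ˢ Finset.range (M₁ + 1)).filter
          (fun q => 1 ≤ q.2 ∧ q.2 ≤ q.1), h q.2 (q.1 - q.2) := by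
    rw [Finset.sum_filter, Finset.sum_product]
    apply Finset.sum_congr rfl
    intro m hm
    rw [← Finset.sum_filter]
    apply Finset.sum_congr ?_ (fun p _ => rfl)
    ext p
    simp only [Finset.mem_Icc, Finset.mem_filter, Finset.mem_range]
    rw [Finset.mem_range] at hm
    omega
  have e2 : ∑ r ∈ Finset.range M₁, ∑ p ∈ Finset.Icc 1 (M₁ - r), h p r
      = ∑ q ∈ (Finset.range M₁ ×ˢ Finset.range (M₁ + 1)).filter
          (fun q => 1 ≤ q.2 ∧ q.2 ≤ M₁ - q.1), h q.2 q.1 := by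
    rw [Finset.sum_filter, Finset.sum_product]
    apply Finset.sum_congr rfl
    intro r hr
    rw [← Finset.sum_filter]
    apply Finset.sum_congr ?_ (fun p _ => rfl)
    ext p
    simp only [Finset.mem_Icc, Finset.mem_filter, Finset.mem_range]
    rw [Finset.mem_range] at hr
    omega
  rw [e1, e2]
  refine Finset.sum_nbij' (fun q => (q.1 - q.2, q.2)) (fun q => (q.2 + q.1, q.2)) ?_ ?_ ?_ ?_ ?_
  · intro q hq
    simp only [Finset.mem_filter, Finset.mem_product, Finset.mem_range] at hq ⊢
    omega
  · intro q hq
    simp only [Finset.mem_filter, Finset.mem_product, Finset.mem_range] at hq ⊢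
    omega
  · intro q hq
    simp only [Finset.mem_filter, Finset.mem_product, Finset.mem_range] at hq
    have : q.2 + (q.1 - q.2) = q.1 := by omega
    rw [Prod.ext_iff]
    exact ⟨this, rfl⟩
  · intro q hq
    simp only [Finset.mem_filter, Finset.mem_product, Finset.mem_range] at hq
    have : q.2 + q.1 - q.2 = q.1 := by omega
    rw [Prod.ext_iff]
    exact ⟨this, rfl⟩
  · intro q hq
    simp only [Finset.mem_filter, Finset.mem_product, Finset.mem_range] at hq
    rfl

theorem sum_swap_tm (M₁ : ℕ) (f : ℕ → ℕ → β) :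
    ∑ m ∈ Finset.range (M₁ + 1), ∑ t ∈ Finset.Icc 1 m, f m t
      = ∑ t ∈ Finset.Icc 1 M₁, ∑ m ∈ Finset.Icc t M₁, f m t := by
  have e1 : ∑ m ∈ Finset.range (M₁ + 1), ∑ t ∈ Finset.Icc 1 m, f m t
      = ∑ q ∈ (Finset.range (M₁ + 1) ×ˢ Finset.range (M₁ + 1)).filter
          (fun q => 1 ≤ q.2 ∧ q.2 ≤ q.1), f q.1 q.2 := by
    rw [Finset.sum_filter, Finset.sum_product]
    apply Finset.sum_congr rfl
    intro m hm
    rw [← Finset.sum_filter]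
    apply Finset.sum_congr ?_ (fun p _ => rfl)
    ext p
    simp only [Finset.mem_Icc, Finset.mem_filter, Finset.mem_range]
    rw [Finset.mem_range] at hm
    omega
  have e2 : ∑ q ∈ (Finset.range (M₁ + 1) ×ˢ Finset.range (M₁ + 1)).filter
      (fun q => 1 ≤ q.2 ∧ q.2 ≤ q.1), f q.1 q.2
      = ∑ t ∈ Finset.Icc 1 M₁, ∑ m ∈ Finset.Icc t M₁, f m t := by
    rw [Finset.sum_filter, Finset.sum_product_right]
    rw [← Finset.sum_subset (show Finset.Icc 1 M₁ ⊆ Finset.range (M₁ + 1) by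
      intro x hx; rw [Finset.mem_range]; rw [Finset.mem_Icc] at hx; omega)]
    · apply Finset.sum_congr rfl
      intro t ht
      rw [← Finset.sum_filter]
      apply Finset.sum_congr ?_ (fun p _ => rfl)
      ext m
      simp only [Finset.mem_Icc, Finset.mem_filter, Finset.mem_range]
      rw [Finset.mem_Icc] at ht
      omega
    · intro t ht hnot
      apply Finset.sum_eq_zero
      intro m _
      rw [Finset.mem_range] at ht
      rw [Finset.mem_Icc] at hnot
      rw [if_neg (by omega)]
  rw [e1, e2]

theorem comp_partition (t M₁ : ℕ) (g : (Fin t → ℕ) → β) :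
    ∑ m ∈ Finset.Icc t M₁, ∑ c ∈ compositions t m, g c
      = ∑ c ∈ (Fintype.piFinset (fun _ : Fin t => Finset.Icc 1 M₁)).filter
          (fun c => ∑ a, c a ≤ M₁), g c := by
  rw [← Finset.sum_biUnion]
  · apply Finset.sum_congr ?_ (fun c _ => rfl)
    ext c
    rw [Finset.mem_biUnion, Finset.mem_filter, Fintype.mem_piFinset]
    constructor
    · rintro ⟨m, hm, hc⟩
      obtain ⟨h1, h2⟩ := mem_compositions'.mp hc
      rw [Finset.mem_Icc] at hm
      constructor
      · intro a
        rw [Finset.mem_Icc]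
        have hca : c a ≤ ∑ j, c j :=
          Finset.single_le_sum (fun j _ => Nat.zero_le _) (Finset.mem_univ a)
        have h1a := h1 a
        omega
      · omega
    · rintro ⟨h1, h2⟩
      refine ⟨∑ a, c a, ?_, mem_compositions'.mpr ⟨fun a => (Finset.mem_Icc.mp (h1 a)).1, rfl⟩⟩
      rw [Finset.mem_Icc]
      have ht' : t ≤ ∑ a, c a := by
        calc t = ∑ _a : Fin t, 1 := by simp
          _ ≤ ∑ a, c a := Finset.sum_le_sum (fun a _ => (Finset.mem_Icc.mp (h1 a)).1)
      exact ⟨ht', h2⟩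
  · intro x hx y hy hxy
    rw [Function.onFun]
    rw [Finset.disjoint_left]
    intro c hcx hcy
    have h1 := (mem_compositions'.mp hcx).2
    have h2 := (mem_compositions'.mp hcy).2
    exact hxy (by omega)

end AuxSums

section AuxMain

variable {k : Type} [Field k] [CharZero k] {L L' : Type} [AddCommGroup L] [Module k L]
  [AddCommGroup L'] [Module k L']
variable (A : FSLie k L) (B : FSLie k L') (F : InfMor k A B) (α : L)

theorem T_const_filt (j : ℕ) : F.T j (fun _ => α) ∈ B.filt j := by
  have := F.T_filt j (fun _ => α) (fun _ => 1) (fun _ => filt_one_mem A α)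
  simpa using this

theorem T_snoc_filt (r w : ℕ) (x : L) (hx : x ∈ A.filt w) :
    F.T (r + 1) (Fin.snoc (fun _ : Fin r => α) x) ∈ B.filt (r + w) := by
  have hmem : ∀ i, (Fin.snoc (fun _ : Fin r => α) x : Fin (r + 1) → L) i
      ∈ A.filt ((Fin.snoc (fun _ : Fin r => 1) w : Fin (r + 1) → ℕ) i) := by
    intro i
    refine Fin.lastCases ?_ ?_ i
    · rw [Fin.snoc_last, Fin.snoc_last]; exact hx
    · intro j; rw [Fin.snoc_castSucc, Fin.snoc_castSucc]; exact filt_one_mem A α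
  have := F.T_filt (r + 1) (Fin.snoc (fun _ : Fin r => α) x) (Fin.snoc (fun _ : Fin r => 1) w)
    hmem
  have hsum : ∑ i, (Fin.snoc (fun _ : Fin r => 1) w : Fin (r + 1) → ℕ) i = r + w := by
    rw [Fin.sum_snoc]
    simp
  rwa [hsum] at this

theorem T_cons_eq_snoc (hα : α ∈ A.gr 0) (r : ℕ) (x : L) (hx : x ∈ A.gr 1) :
    F.T (r + 1) (Fin.cons x (fun _ : Fin r => α))
      = F.T (r + 1) (Fin.snoc (fun _ : Fin r => α) x) := by
  set σ : Equiv.Perm (Fin (r + 1)) := (finRotate (r + 1))⁻¹ with hσ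
  have hv : (Fin.snoc (fun _ : Fin r => α) x : Fin (r + 1) → L) ∘ σ
      = Fin.cons x (fun _ : Fin r => α) := by
    funext i
    refine Fin.cases ?_ ?_ i
    · have h0 : σ 0 = Fin.last r := by
        rw [hσ, Equiv.Perm.inv_def, Equiv.symm_apply_eq, finRotate_last]
      show (Fin.snoc (fun _ : Fin r => α) x : Fin (r + 1) → L) (σ 0) = _
      rw [h0, Fin.snoc_last, Fin.cons_zero]
    · intro j
      have hs : σ j.succ = j.castSucc := by
        rw [hσ, Equiv.Perm.inv_def, Equiv.symm_apply_eq, finRotate_succ_apply,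
          Fin.coeSucc_eq_succ]
      show (Fin.snoc (fun _ : Fin r => α) x : Fin (r + 1) → L) (σ j.succ) = _
      rw [hs, Fin.snoc_castSucc, Fin.cons_succ]
  have hd : ∀ i j : Fin (r + 1), i ≠ j →
      (Fin.snoc (fun _ : Fin r => (0 : ℤ)) 1 : Fin (r + 1) → ℤ) i
        * (Fin.snoc (fun _ : Fin r => (0 : ℤ)) 1 : Fin (r + 1) → ℤ) j = 0 := by
    intro i j hij
    rcases eq_or_ne j (Fin.last r) with rfl | hj
    · obtain ⟨y, rfl⟩ := Fin.exists_castSucc_eq.mpr hij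
      rw [Fin.snoc_castSucc]
      exact zero_mul _
    · obtain ⟨y, rfl⟩ := Fin.exists_castSucc_eq.mpr hj
      rw [Fin.snoc_castSucc]
      exact mul_zero _
  have hhom : ∀ i, (Fin.snoc (fun _ : Fin r => α) x : Fin (r + 1) → L) i
      ∈ A.gr ((Fin.snoc (fun _ : Fin r => (0 : ℤ)) 1 : Fin (r + 1) → ℤ) i) := by
    intro i
    refine Fin.lastCases ?_ ?_ i
    · rw [Fin.snoc_last, Fin.snoc_last]; exact hx
    · intro j; rw [Fin.snoc_castSucc, Fin.snoc_castSucc]; exact hα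
  have hsymm := F.T_symm (r + 1) σ (Fin.snoc (fun _ : Fin r => α) x)
    (Fin.snoc (fun _ : Fin r => (0 : ℤ)) 1) hhom
  rw [hv] at hsymm
  rw [hsymm, koszulSign_eq_one σ _ hd, one_smul]

theorem T_cons_linear (r : ℕ) (x : L) :
    F.T (r + 1) (Fin.cons x (fun _ : Fin r => α))
      = (F.T (r + 1)).toLinearMap (Fin.cons 0 (fun _ : Fin r => α)) 0 x := by
  rw [MultilinearMap.toLinearMap_apply, Fin.update_cons_zero]

theorem T_snoc_linear (r : ℕ) (x : L) :
    F.T (r + 1) (Fin.snoc (fun _ : Fin r => α) x)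
      = (F.T (r + 1)).toLinearMap (Fin.snoc (fun _ : Fin r => α) 0) (Fin.last r) x := by
  rw [MultilinearMap.toLinearMap_apply, Fin.update_snoc_last]

theorem claimA (hα : α ∈ A.gr 0) (c : L) (s : L') (n : ℕ) (Nc Ns : ℕ)
    (hNc : ∀ M, Nc ≤ M → c - ∑ i ∈ Finset.range M, curvSeries k A α i ∈ A.filt n)
    (hNs : ∀ M, Ns ≤ M → s - ∑ i ∈ Finset.range M,
      ((i.factorial : k)⁻¹ • F.T (i + 1) (Fin.snoc (fun _ : Fin i => α) c)) ∈ B.filt n)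
    (M₁ : ℕ) (h1 : Ns ≤ M₁) (h2 : Nc + n ≤ M₁) :
    s - ∑ m ∈ Finset.range (M₁ + 1),
      (m.factorial : k)⁻¹ • compLHS k A F.T (fun _ : Fin m => α) (fun _ => (0 : ℤ))
      ∈ B.filt n := by
  have step1 : ∀ m : ℕ,
      (m.factorial : k)⁻¹ • compLHS k A F.T (fun _ : Fin m => α) (fun _ => (0 : ℤ))
      = ∑ p ∈ Finset.Icc 1 m, ((p.factorial : k)⁻¹ * ((m - p).factorial : k)⁻¹) •
          F.T (m - p + 1) (Fin.cons (A.br p (fun _ => α)) (fun _ : Fin (m - p) => α)) := by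
    intro m
    rw [compLHS_const, Finset.smul_sum]
    apply Finset.sum_congr rfl
    intro p hp
    rw [← Nat.cast_smul_eq_nsmul k, smul_smul, coeff_choose (Finset.mem_Icc.mp hp).2]
  rw [Finset.sum_congr rfl (fun m _ => step1 m)]
  rw [sum_triangle_reindex M₁ (fun p r => ((p.factorial : k)⁻¹ * (r.factorial : k)⁻¹) •
    F.T (r + 1) (Fin.cons (A.br p (fun _ => α)) (fun _ : Fin r => α)))]
  have step3 : ∀ r : ℕ,
      ∑ p ∈ Finset.Icc 1 (M₁ - r), ((p.factorial : k)⁻¹ * (r.factorial : k)⁻¹) •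
        F.T (r + 1) (Fin.cons (A.br p (fun _ => α)) (fun _ : Fin r => α))
      = (r.factorial : k)⁻¹ • F.T (r + 1) (Fin.cons
          (∑ i ∈ Finset.range (M₁ - r + 1), curvSeries k A α i) (fun _ : Fin r => α)) := by
    intro r
    have hsub : Finset.Icc 1 (M₁ - r) ⊆ Finset.range (M₁ - r + 1) := by
      intro x hx; rw [Finset.mem_range]; rw [Finset.mem_Icc] at hx; omega
    have hzero : ∀ x ∈ Finset.range (M₁ - r + 1), x ∉ Finset.Icc 1 (M₁ - r) →
        curvSeries k A α x = 0 := by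
      intro x hx hnx
      rw [Finset.mem_range] at hx
      rw [Finset.mem_Icc] at hnx
      have : x = 0 := by omega
      subst this
      unfold curvSeries
      rw [if_pos rfl]
    have hCC : ∑ i ∈ Finset.range (M₁ - r + 1), curvSeries k A α i
        = ∑ p ∈ Finset.Icc 1 (M₁ - r), (p.factorial : k)⁻¹ • A.br p (fun _ => α) := by
      rw [← Finset.sum_subset hsub hzero]
      apply Finset.sum_congr rfl
      intro p hp
      unfold curvSeries
      rw [if_neg (by rw [Finset.mem_Icc] at hp; omega)]
    calc ∑ p ∈ Finset.Icc 1 (M₁ - r), ((p.factorial : k)⁻¹ * (r.factorial : k)⁻¹) •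
          F.T (r + 1) (Fin.cons (A.br p (fun _ => α)) (fun _ : Fin r => α))
        = ∑ p ∈ Finset.Icc 1 (M₁ - r), (r.factorial : k)⁻¹ •
            ((F.T (r + 1)).toLinearMap (Fin.cons 0 (fun _ : Fin r => α)) 0
              ((p.factorial : k)⁻¹ • A.br p (fun _ => α))) := by
          apply Finset.sum_congr rfl
          intro p _
          rw [map_smul, ← T_cons_linear A B F α, smul_smul, mul_comm ((r.factorial : k))⁻¹]
      _ = (r.factorial : k)⁻¹ • ((F.T (r + 1)).toLinearMap (Fin.cons 0 (fun _ : Fin r => α)) 0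
            (∑ p ∈ Finset.Icc 1 (M₁ - r), (p.factorial : k)⁻¹ • A.br p (fun _ => α))) := by
          rw [← Finset.smul_sum, ← map_sum]
      _ = (r.factorial : k)⁻¹ • F.T (r + 1) (Fin.cons
            (∑ i ∈ Finset.range (M₁ - r + 1), curvSeries k A α i) (fun _ : Fin r => α)) := by
          rw [← hCC, ← T_cons_linear]
  have step4 : ∀ r : ℕ,
      F.T (r + 1) (Fin.cons (∑ i ∈ Finset.range (M₁ - r + 1), curvSeries k A α i)
        (fun _ : Fin r => α))
      = F.T (r + 1) (Fin.snoc (fun _ : Fin r => α)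
          (∑ i ∈ Finset.range (M₁ - r + 1), curvSeries k A α i)) := by
    intro r
    apply T_cons_eq_snoc A B F α hα
    exact Submodule.sum_mem _ (fun i _ => curvSeries_mem_gr A hα i)
  rw [Finset.sum_congr rfl (fun r _ => by rw [step3 r, step4 r])]
  have X1 := hNs M₁ h1
  have X2 : ∑ r ∈ Finset.range M₁,
      ((r.factorial : k)⁻¹ • F.T (r + 1) (Fin.snoc (fun _ : Fin r => α) c)
        - (r.factorial : k)⁻¹ • F.T (r + 1) (Fin.snoc (fun _ : Fin r => α)
            (∑ i ∈ Finset.range (M₁ - r + 1), curvSeries k A α i))) ∈ B.filt n := by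
    apply Submodule.sum_mem
    intro r hr
    rw [T_snoc_linear A B F α r c, T_snoc_linear A B F α r
      (∑ i ∈ Finset.range (M₁ - r + 1), curvSeries k A α i), ← smul_sub, ← map_sub,
      ← T_snoc_linear A B F α r]
    apply Submodule.smul_mem
    rcases lt_or_ge r n with hrn | hrn
    · have hcc : c - ∑ i ∈ Finset.range (M₁ - r + 1), curvSeries k A α i ∈ A.filt n :=
        hNc (M₁ - r + 1) (by omega)
      exact B.filt_antitone (by omega) (T_snoc_filt A B F α r n _ hcc)
    · have hcc : c - ∑ i ∈ Finset.range (M₁ - r + 1), curvSeries k A α i ∈ A.filt 0 :=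
        filt_zero_mem A _
      exact B.filt_antitone (by omega) (T_snoc_filt A B F α r 0 _ hcc)
  have heq : s - ∑ r ∈ Finset.range M₁, (r.factorial : k)⁻¹ •
        F.T (r + 1) (Fin.snoc (fun _ : Fin r => α)
          (∑ i ∈ Finset.range (M₁ - r + 1), curvSeries k A α i))
      = (s - ∑ r ∈ Finset.range M₁, (r.factorial : k)⁻¹ •
          F.T (r + 1) (Fin.snoc (fun _ : Fin r => α) c))
        + ∑ r ∈ Finset.range M₁,
            ((r.factorial : k)⁻¹ • F.T (r + 1) (Fin.snoc (fun _ : Fin r => α) c)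
              - (r.factorial : k)⁻¹ • F.T (r + 1) (Fin.snoc (fun _ : Fin r => α)
                  (∑ i ∈ Finset.range (M₁ - r + 1), curvSeries k A α i))) := by
    rw [Finset.sum_sub_distrib]
    abel
  rw [heq]
  exact Submodule.add_mem _ X1 X2

theorem claimB (hα : α ∈ A.gr 0) (n T M M₁ : ℕ) (hn : 1 ≤ n) (hTn : n ≤ T)
    (hMn : n ≤ M) (hM₁ : T * M ≤ M₁) :
    (∑ m ∈ Finset.range (M₁ + 1),
        (m.factorial : k)⁻¹ • compLHS k A F.T (fun _ : Fin m => α) (fun _ => (0 : ℤ)))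
      - (∑ t ∈ Finset.Icc 1 T, (t.factorial : k)⁻¹ •
          B.br t (fun _ => ∑ i ∈ Finset.range (M + 1), pushSeries k F.T α i)) ∈ B.filt n := by
  classical
  have hL : ∑ m ∈ Finset.range (M₁ + 1),
      (m.factorial : k)⁻¹ • compLHS k A F.T (fun _ : Fin m => α) (fun _ => (0 : ℤ))
      = ∑ t ∈ Finset.Icc 1 M₁,
          ∑ c ∈ (Fintype.piFinset (fun _ : Fin t => Finset.Icc 1 M₁)).filter
            (fun c => ∑ a, c a ≤ M₁),
            ((t.factorial : k)⁻¹ * ∏ a, ((c a).factorial : k)⁻¹) •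
              B.br t (fun a => F.T (c a) (fun _ => α)) := by
    have h1 : ∀ m : ℕ,
        (m.factorial : k)⁻¹ • compLHS k A F.T (fun _ : Fin m => α) (fun _ => (0 : ℤ))
        = ∑ t ∈ Finset.Icc 1 m, ∑ c ∈ compositions t m,
            ((t.factorial : k)⁻¹ * ∏ a, ((c a).factorial : k)⁻¹) •
              B.br t (fun a => F.T (c a) (fun _ => α)) := by
      intro m
      have hcompat : compLHS k A F.T (fun _ : Fin m => α) (fun _ => (0 : ℤ))
          = compRHS k B F.T (fun _ : Fin m => α) (fun _ => (0 : ℤ)) :=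
        F.compat m (fun _ => α) (fun _ => 0) (fun _ => hα)
      rw [hcompat, compRHS_const, Finset.smul_sum]
      apply Finset.sum_congr rfl
      intro t _
      exact core_step A B F α hα m t
    rw [Finset.sum_congr rfl (fun m _ => h1 m),
      sum_swap_tm M₁ (fun m t => ∑ c ∈ compositions t m,
        ((t.factorial : k)⁻¹ * ∏ a, ((c a).factorial : k)⁻¹) •
          B.br t (fun a => F.T (c a) (fun _ => α)))]
    exact Finset.sum_congr rfl (fun t _ => comp_partition t M₁ _)
  have hR : ∀ t : ℕ, (t.factorial : k)⁻¹ •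
      B.br t (fun _ => ∑ i ∈ Finset.range (M + 1), pushSeries k F.T α i)
      = ∑ c ∈ Fintype.piFinset (fun _ : Fin t => Finset.Icc 1 M),
          ((t.factorial : k)⁻¹ * ∏ a, ((c a).factorial : k)⁻¹) •
            B.br t (fun a => F.T (c a) (fun _ => α)) := by
    intro t
    have hexp := (B.br t).map_sum_finset (fun (_ : Fin t) (i : ℕ) => pushSeries k F.T α i)
      (fun _ => Finset.range (M + 1))
    rw [hexp]
    rw [← Finset.sum_subset (Fintype.piFinset_subset _ _
      (fun a => show Finset.Icc 1 M ⊆ Finset.range (M + 1) by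
        intro x hx; rw [Finset.mem_range]; rw [Finset.mem_Icc] at hx; omega))]
    · rw [Finset.smul_sum]
      apply Finset.sum_congr rfl
      intro r hr
      rw [Fintype.mem_piFinset] at hr
      have hpos : ∀ a, 1 ≤ r a := fun a => (Finset.mem_Icc.mp (hr a)).1
      have hfn : (fun a => pushSeries k F.T α (r a))
          = fun a => ((r a).factorial : k)⁻¹ • F.T (r a) (fun _ => α) := by
        funext a
        unfold pushSeries
        rw [if_neg (by have := hpos a; omega)]
      rw [hfn, MultilinearMap.map_smul_univ, smul_smul]
    · intro r hrange hrnot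
      rw [Fintype.mem_piFinset] at hrange hrnot
      push_neg at hrnot
      obtain ⟨a, ha⟩ := hrnot
      have hzero : r a = 0 := by
        have := hrange a
        rw [Finset.mem_range] at this
        rw [Finset.mem_Icc] at ha
        omega
      apply MultilinearMap.map_coord_zero (i := a)
      show pushSeries k F.T α (r a) = 0
      unfold pushSeries
      rw [hzero, if_pos rfl]
  rw [hL, Finset.sum_congr rfl (fun t _ => hR t)]
  rw [Finset.sum_sigma', Finset.sum_sigma']
  have hsub : (Finset.Icc 1 T).sigma
      (fun t => Fintype.piFinset (fun _ : Fin t => Finset.Icc 1 M))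
      ⊆ (Finset.Icc 1 M₁).sigma
        (fun t => (Fintype.piFinset (fun _ : Fin t => Finset.Icc 1 M₁)).filter
          (fun c => ∑ a, c a ≤ M₁)) := by
    intro x hx
    rw [Finset.mem_sigma] at hx ⊢
    obtain ⟨hx1, hx2⟩ := hx
    rw [Finset.mem_Icc] at hx1
    rw [Fintype.mem_piFinset] at hx2
    have hT1 : 1 ≤ T := le_trans hn hTn
    have hM1 : 1 ≤ M := le_trans hn hMn
    have hTM : T ≤ M₁ := le_trans (Nat.le_mul_of_pos_right T (by omega)) hM₁
    have hMM : M ≤ M₁ := le_trans (by nlinarith) hM₁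
    constructor
    · rw [Finset.mem_Icc]
      omega
    · rw [Finset.mem_filter, Fintype.mem_piFinset]
      constructor
      · intro a
        have := Finset.mem_Icc.mp (hx2 a)
        rw [Finset.mem_Icc]
        omega
      · have hsumle : ∑ a, x.2 a ≤ x.1 * M := by
          calc ∑ a, x.2 a ≤ ∑ _a : Fin x.1, M :=
              Finset.sum_le_sum (fun a _ => (Finset.mem_Icc.mp (hx2 a)).2)
            _ = x.1 * M := by simp [Finset.sum_const, mul_comm]
        have : x.1 * M ≤ T * M := Nat.mul_le_mul_right M hx1.2
        omega
  rw [show (∑ x ∈ (Finset.Icc 1 M₁).sigma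
        (fun t => (Fintype.piFinset (fun _ : Fin t => Finset.Icc 1 M₁)).filter
          (fun c => ∑ a, c a ≤ M₁)),
        ((x.1.factorial : k)⁻¹ * ∏ a, ((x.2 a).factorial : k)⁻¹) •
          B.br x.1 (fun a => F.T (x.2 a) (fun _ => α)))
      - (∑ x ∈ (Finset.Icc 1 T).sigma
          (fun t => Fintype.piFinset (fun _ : Fin t => Finset.Icc 1 M)),
          ((x.1.factorial : k)⁻¹ * ∏ a, ((x.2 a).factorial : k)⁻¹) •
            B.br x.1 (fun a => F.T (x.2 a) (fun _ => α)))
      = ∑ x ∈ (Finset.Icc 1 M₁).sigma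
          (fun t => (Fintype.piFinset (fun _ : Fin t => Finset.Icc 1 M₁)).filter
            (fun c => ∑ a, c a ≤ M₁)) \ (Finset.Icc 1 T).sigma
          (fun t => Fintype.piFinset (fun _ : Fin t => Finset.Icc 1 M)),
          ((x.1.factorial : k)⁻¹ * ∏ a, ((x.2 a).factorial : k)⁻¹) •
            B.br x.1 (fun a => F.T (x.2 a) (fun _ => α))
    from by rw [← Finset.sum_sdiff hsub]; exact add_sub_cancel_right _ _]
  apply Submodule.sum_mem
  intro x hx
  rw [Finset.mem_sdiff] at hx
  obtain ⟨hxP, hxQ⟩ := hx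
  rw [Finset.mem_sigma] at hxP
  obtain ⟨hxt, hxc⟩ := hxP
  rw [Finset.mem_filter, Fintype.mem_piFinset] at hxc
  have hmem : B.br x.1 (fun a => F.T (x.2 a) (fun _ => α)) ∈ B.filt (∑ a, x.2 a) :=
    br_filt_all B x.1 _ (fun a => x.2 a) (fun a => T_const_filt A B F α (x.2 a))
  apply Submodule.smul_mem
  refine B.filt_antitone ?_ hmem
  by_contra hcon
  push_neg at hcon
  apply hxQ
  rw [Finset.mem_sigma]
  constructor
  · rw [Finset.mem_Icc]
    rw [Finset.mem_Icc] at hxt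
    have ht' : x.1 ≤ ∑ a, x.2 a := by
      calc x.1 = ∑ _a : Fin x.1, 1 := by simp
        _ ≤ ∑ a, x.2 a := Finset.sum_le_sum (fun a _ => (Finset.mem_Icc.mp (hxc.1 a)).1)
    omega
  · rw [Fintype.mem_piFinset]
    intro a
    rw [Finset.mem_Icc]
    have h1a := (Finset.mem_Icc.mp (hxc.1 a)).1
    have hle : x.2 a ≤ ∑ b, x.2 b :=
      Finset.single_le_sum (fun b _ => Nat.zero_le _) (Finset.mem_univ a)
    omega

theorem tail_step (n t M : ℕ) (ht : 1 ≤ t) (p : L')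
    (hpq : p - (∑ i ∈ Finset.range (M + 1), pushSeries k F.T α i) ∈ B.filt n) :
    (t.factorial : k)⁻¹ • B.br t (fun _ => ∑ i ∈ Finset.range (M + 1), pushSeries k F.T α i)
      - curvSeries k B p t ∈ B.filt n := by
  classical
  set q : L' := ∑ i ∈ Finset.range (M + 1), pushSeries k F.T α i with hq
  have hcurv : curvSeries k B p t = (t.factorial : k)⁻¹ • B.br t (fun _ => p) := by
    unfold curvSeries
    rw [if_neg (by omega)]
  have hp' : (fun _ : Fin t => p) = (fun _ : Fin t => q) + (fun _ : Fin t => p - q) := by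
    funext i
    simp
  have hexp : B.br t (fun _ => p)
      = ∑ S : Finset (Fin t), B.br t (S.piecewise (fun _ => q) (fun _ => p - q)) := by
    rw [hp']
    exact (B.br t).map_add_univ _ _
  have huniv : B.br t (Finset.univ.piecewise (fun _ : Fin t => q) (fun _ => p - q))
      = B.br t (fun _ => q) := by
    rw [Finset.piecewise_univ]
  have hsplit : B.br t (fun _ => p) = B.br t (fun _ => q)
      + ∑ S ∈ (Finset.univ : Finset (Finset (Fin t))).erase Finset.univ,
          B.br t (S.piecewise (fun _ => q) (fun _ => p - q)) := by
    rw [hexp, ← Finset.sum_erase_add _ _ (Finset.mem_univ (Finset.univ : Finset (Fin t))),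
      huniv]
    abel
  have hterm : ∀ S : Finset (Fin t), S ≠ Finset.univ →
      B.br t (S.piecewise (fun _ => q) (fun _ => p - q)) ∈ B.filt n := by
    intro S hS
    obtain ⟨a, ha⟩ : ∃ a, a ∉ S := by
      by_contra hcon
      push_neg at hcon
      exact hS (Finset.eq_univ_iff_forall.mpr hcon)
    have hmem := br_filt_all B t (S.piecewise (fun _ => q) (fun _ => p - q))
      (fun i => if i ∈ S then 1 else n) ?_
    · refine B.filt_antitone ?_ hmem
      calc n = if a ∈ S then 1 else n := (if_neg ha).symm
        _ ≤ ∑ i, if i ∈ S then 1 else n :=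
          Finset.single_le_sum (f := fun i => if i ∈ S then 1 else n)
            (fun i _ => Nat.zero_le _) (Finset.mem_univ a)
    · intro i
      by_cases hi : i ∈ S
      · simp only [Finset.piecewise_eq_of_mem _ _ _ hi, if_pos hi]
        exact filt_one_mem B q
      · simp only [Finset.piecewise_eq_of_notMem _ _ _ hi, if_neg hi]
        exact hpq
  have heq : (t.factorial : k)⁻¹ • B.br t (fun _ => q) - curvSeries k B p t
      = -((t.factorial : k)⁻¹ • ∑ S ∈ (Finset.univ : Finset (Finset (Fin t))).erase Finset.univ,
          B.br t (S.piecewise (fun _ => q) (fun _ => p - q))) := by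
    rw [hcurv, hsplit, smul_add]
    abel
  rw [heq]
  apply Submodule.neg_mem
  apply Submodule.smul_mem
  exact Submodule.sum_mem _ (fun S hS => hterm S (Finset.ne_of_mem_erase hS))

end AuxMain

/-! ## STATEMENT 6
For a continuous `∞`-morphism `F : L → L̃` and a degree-`0` element `α`:
`curv (F_*(α)) = ∑_{m ≥ 0} (1/m!) F'(α^m ⬝ curv α)`.
In particular if `curv α = 0` then `curv (F_*(α)) = 0`. -/
theorem curvature_of_pushforward
    (k : Type) [Field k] [CharZero k] (L L' : Type)
    [AddCommGroup L] [Module k L] [AddCommGroup L'] [Module k L']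
    (A : FSLie k L) (B : FSLie k L') (F : InfMor k A B)
    (α : L) (hα : α ∈ A.gr 0)
    (c : L) (hc : HasFSumF k A.filt (curvSeries k A α) c)
    (p : L') (hp : HasFSumF k B.filt (pushSeries k F.T α) p)
    (s : L')
    (hs : HasFSumF k B.filt
      (fun m => ((m.factorial : k)⁻¹) •
        F.T (m + 1) (Fin.snoc (fun _ : Fin m => α) c)) s) :
    HasFSumF k B.filt (curvSeries k B p) s ∧
      (c = 0 → HasFSumF k B.filt (curvSeries k B p) 0) := by
  have main : HasFSumF k B.filt (curvSeries k B p) s := by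
    show ∀ n : ℕ, ∃ N : ℕ, ∀ M : ℕ, N ≤ M →
      s - ∑ i ∈ Finset.range M, curvSeries k B p i ∈ B.filt n
    intro n
    rcases Nat.eq_zero_or_pos n with rfl | hn
    · exact ⟨0, fun M _ => by rw [B.filt_zero]; trivial⟩
    obtain ⟨Np, hNp⟩ := hp n
    obtain ⟨Nc, hNc⟩ := hc n
    obtain ⟨Ns, hNs⟩ := hs n
    refine ⟨n + 2, ?_⟩
    intro Mo hMo
    set T := Mo - 1 with hT
    set M := Np + n with hM
    set M₁ := T * M + (Nc + Ns + n) with hM₁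
    have hq : p - ∑ i ∈ Finset.range (M + 1), pushSeries k F.T α i ∈ B.filt n :=
      hNp (M + 1) (by omega)
    have X1 := claimA A B F α hα c s n Nc Ns hNc hNs M₁ (by omega) (by omega)
    have X2 := claimB A B F α hα n T M M₁ hn (by omega) (by omega) (by omega)
    have X3 : (∑ t ∈ Finset.Icc 1 T, (t.factorial : k)⁻¹ •
          B.br t (fun _ => ∑ i ∈ Finset.range (M + 1), pushSeries k F.T α i))
        - ∑ t ∈ Finset.range Mo, curvSeries k B p t ∈ B.filt n := by
      have hrange : ∑ t ∈ Finset.range Mo, curvSeries k B p t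
          = ∑ t ∈ Finset.Icc 1 T, curvSeries k B p t := by
        rw [← Finset.sum_subset (show Finset.Icc 1 T ⊆ Finset.range Mo by
          intro x hx; rw [Finset.mem_range]; rw [Finset.mem_Icc] at hx; omega)]
        intro x hx hnx
        rw [Finset.mem_range] at hx
        rw [Finset.mem_Icc] at hnx
        have hx0 : x = 0 := by omega
        subst hx0
        unfold curvSeries
        rw [if_pos rfl]
      rw [hrange, ← Finset.sum_sub_distrib]
      exact Submodule.sum_mem _ (fun t ht =>
        tail_step A B F α n t M (Finset.mem_Icc.mp ht).1 p hq)
    have heq : s - ∑ t ∈ Finset.range Mo, curvSeries k B p t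
        = (s - (∑ m ∈ Finset.range (M₁ + 1),
            (m.factorial : k)⁻¹ • compLHS k A F.T (fun _ : Fin m => α) (fun _ => (0 : ℤ))))
          + (((∑ m ∈ Finset.range (M₁ + 1),
                (m.factorial : k)⁻¹ • compLHS k A F.T (fun _ : Fin m => α) (fun _ => (0 : ℤ)))
              - (∑ t ∈ Finset.Icc 1 T, (t.factorial : k)⁻¹ •
                  B.br t (fun _ => ∑ i ∈ Finset.range (M + 1), pushSeries k F.T α i)))
            + ((∑ t ∈ Finset.Icc 1 T, (t.factorial : k)⁻¹ •
                  B.br t (fun _ => ∑ i ∈ Finset.range (M + 1), pushSeries k F.T α i))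
                - ∑ t ∈ Finset.range Mo, curvSeries k B p t)) := by
      abel
    rw [heq]
    exact Submodule.add_mem _ X1 (Submodule.add_mem _ X2 X3)
  refine ⟨main, ?_⟩
  intro hc0
  have hzero : ∀ i : ℕ,
      ((i.factorial : k)⁻¹ • F.T (i + 1) (Fin.snoc (fun _ : Fin i => α) c)) = 0 := by
    intro i
    have h0 : F.T (i + 1) (Fin.snoc (fun _ : Fin i => α) (0 : L)) = 0 :=
      (F.T (i + 1)).map_coord_zero (Fin.last i) (by rw [Fin.snoc_last])
    rw [hc0, h0, smul_zero]
  have hs0 : ∀ n, s ∈ B.filt n := by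
    intro n
    obtain ⟨N, hN⟩ := hs n
    have hmem := hN N le_rfl
    have hsum0 : ∑ i ∈ Finset.range N,
        ((i.factorial : k)⁻¹ • F.T (i + 1) (Fin.snoc (fun _ : Fin i => α) c)) = 0 :=
      Finset.sum_eq_zero (fun i _ => hzero i)
    rwa [hsum0, sub_zero] at hmem
  have hs' : s = 0 := B.hausdorff s hs0
  rw [← hs']
  exact main
end

section
/- The shift bijections commute with pushforward along ∞-morphisms: for a continuous ∞-morphism F: L → L̃ of filtered shifted L∞-algebras and an MC element α ∈ L, one has F_*(α + β) = F_*(α) + (F^α)_*(β) for every MC element β of L^α, where F^α: L^α → L̃^{F_*(α)} is the twist of F by α. -/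
open scoped BigOperators

lemma exists_perm_mem_iff {γ : Type} [Fintype γ] [DecidableEq γ] (s t : Finset γ)
    (h : s.card = t.card) : ∃ σ : Equiv.Perm γ, ∀ i, σ i ∈ t ↔ i ∈ s := by
  have hc : sᶜ.card = tᶜ.card := by simp [Finset.card_compl, h]
  let e : {x // x ∈ s} ≃ {x // x ∈ t} := Finset.equivOfCardEq h
  let e' : {x // ¬ x ∈ s} ≃ {x // ¬ x ∈ t} :=
    ((Equiv.subtypeEquivRight (fun x => (Finset.mem_compl).symm)).trans
      (Finset.equivOfCardEq hc)).trans (Equiv.subtypeEquivRight (fun x => Finset.mem_compl))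
  refine ⟨(Equiv.sumCompl (· ∈ s)).symm.trans ((e.sumCongr e').trans (Equiv.sumCompl (· ∈ t))), ?_⟩
  intro i
  by_cases hi : i ∈ s
  · simp only [Equiv.trans_apply, Equiv.sumCompl_symm_apply_of_pos hi,
      Equiv.sumCongr_apply, Sum.map_inl, Equiv.sumCompl_apply_inl]
    exact iff_of_true (e ⟨i, hi⟩).2 hi
  · simp only [Equiv.trans_apply, Equiv.sumCompl_symm_apply_of_neg hi,
      Equiv.sumCongr_apply, Sum.map_inr, Equiv.sumCompl_apply_inr]
    exact iff_of_false (e' ⟨i, hi⟩).2 hi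

lemma card_filter_val_lt (n j : ℕ) (hj : j ≤ n) :
    (Finset.univ.filter (fun i : Fin n => (i : ℕ) < j)).card = j := by
  have : Finset.univ.filter (fun i : Fin n => (i : ℕ) < j)
      = Finset.map (Fin.castLEEmb hj) Finset.univ := by
    ext i
    simp only [Finset.mem_filter, Finset.mem_univ, true_and, Finset.mem_map,
      Fin.castLEEmb_apply]
    constructor
    · intro h; exact ⟨⟨(i : ℕ), h⟩, by ext; simp⟩
    · rintro ⟨a, rfl⟩; simpa using a.2
  rw [this, Finset.card_map, Finset.card_univ, Fintype.card_fin]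

lemma my_binomial (k : Type) [Field k] {L L' : Type} [AddCommGroup L] [Module k L]
    [AddCommGroup L'] [Module k L']
    (T : ∀ m : ℕ, MultilinearMap k (fun _ : Fin m => L) L')
    (α β : L)
    (hsym : ∀ (n : ℕ) (σ : Equiv.Perm (Fin n)) (v : Fin n → L),
      (∀ i, v i = α ∨ v i = β) → T n (v ∘ σ) = T n v)
    (n : ℕ) :
    T n (fun _ => α + β)
      = ∑ j ∈ Finset.range (n + 1),
          (n.choose j : k) • T n (fun i : Fin n => if (i : ℕ) < j then α else β) := by
  classical
  have hadd : (fun _ : Fin n => α + β) = (fun _ : Fin n => α) + (fun _ : Fin n => β) := rfl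
  rw [hadd, MultilinearMap.map_add_univ]
  have huniv : (Finset.univ : Finset (Finset (Fin n))) = (Finset.univ : Finset (Fin n)).powerset := by
    simp [Finset.powerset_univ]
  rw [huniv, Finset.sum_powerset, Finset.card_univ, Fintype.card_fin]
  refine Finset.sum_congr rfl fun j hj => ?_
  have hjn : j ≤ n := by simpa using Finset.mem_range_succ_iff.mp hj
  have hkey : ∀ s ∈ Finset.powersetCard j (Finset.univ : Finset (Fin n)),
      T n ((s : Finset (Fin n)).piecewise (fun _ => α) (fun _ => β))
        = T n (fun i : Fin n => if (i : ℕ) < j then α else β) := by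
    intro s hs
    have hcard : (Finset.univ.filter (fun i : Fin n => (i : ℕ) < j)).card = s.card := by
      rw [card_filter_val_lt n j hjn, (Finset.mem_powersetCard.mp hs).2]
    obtain ⟨σ, hσ⟩ := exists_perm_mem_iff _ s hcard
    have hcomp : (s.piecewise (fun _ => α) (fun _ => β)) ∘ σ
        = fun i : Fin n => if (i : ℕ) < j then α else β := by
      funext i
      simp only [Function.comp_apply, Finset.piecewise]
      by_cases h : (i : ℕ) < j
      · rw [if_pos ((hσ i).mpr (by simp [h])), if_pos h]
      · rw [if_neg (fun hm => h (by simpa using (hσ i).mp hm)), if_neg h]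
    rw [← hcomp]
    exact (hsym n σ (s.piecewise (fun _ => α) (fun _ => β))
      (fun i => by by_cases h : i ∈ s <;> simp [Finset.piecewise, h])).symm
  rw [Finset.sum_congr rfl hkey, Finset.sum_const, Finset.card_powersetCard,
    Finset.card_univ, Fintype.card_fin, ← Nat.cast_smul_eq_nsmul k]

lemma my_append_const {X : Type} (j m : ℕ) (a b : X) :
    Fin.append (fun _ : Fin j => a) (fun _ : Fin m => b)
      = fun i : Fin (j + m) => if (i : ℕ) < j then a else b := by
  funext i
  by_cases hi : (i : ℕ) < j <;> simp [Fin.append, Fin.addCases, hi]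

lemma my_sum_sub_sum_mem (k : Type) [Field k] {L' : Type} [AddCommGroup L'] [Module k L']
    (S : Submodule k L') (P Q : Finset (ℕ × ℕ)) (f : ℕ × ℕ → L')
    (h : ∀ p, ((p ∈ P ∧ p ∉ Q) ∨ (p ∈ Q ∧ p ∉ P)) → f p ∈ S) :
    (∑ p ∈ P, f p) - (∑ p ∈ Q, f p) ∈ S := by
  classical
  have h1 := Finset.sum_sdiff (f := f) (Finset.inter_subset_left (s₁ := P) (s₂ := Q))
  have h2 := Finset.sum_sdiff (f := f) (Finset.inter_subset_right (s₁ := P) (s₂ := Q))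
  have : (∑ p ∈ P, f p) - (∑ p ∈ Q, f p)
      = (∑ p ∈ P \ (P ∩ Q), f p) - (∑ p ∈ Q \ (P ∩ Q), f p) := by
    rw [← h1, ← h2]; abel
  rw [this]
  refine sub_mem (Submodule.sum_mem _ ?_) (Submodule.sum_mem _ ?_) <;> intro p hp <;>
    simp only [Finset.mem_sdiff, Finset.mem_inter, not_and] at hp
  · exact h p (Or.inl ⟨hp.1, fun hq => (hp.2 hp.1 hq)⟩)
  · exact h p (Or.inr ⟨hp.1, fun hq => (hp.2 hq hp.1)⟩)

/-! ## STATEMENT 12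
Shift bijections commute with pushforwards: for a continuous `∞`-morphism
`F : L → L̃`, an MC element `α ∈ L` and an MC element `β` of the twist `L^α`:
`F_*(α + β) = F_*(α) + (F^α)_*(β)`, where the twisted morphism has Taylor
components `(F^α)'(v₁⋯v_m) = ∑_{j ≥ 0} (1/j!) F'(α^j v₁⋯v_m)`. -/
theorem pushforward_shift_compatibility
    (k : Type) [Field k] [CharZero k] (L L' : Type)
    [AddCommGroup L] [Module k L] [AddCommGroup L'] [Module k L']
    (A : FSLie k L) (B : FSLie k L') (F : InfMor k A B)
    (α : L) (hα : IsMC k A α)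
    (A' : FSLie k L) (hA' : IsTwist k A A' α)          -- `A' = L^α`
    (β : L) (hβ : IsMC k A' β)                          -- `β` is MC in `L^α`
    (u : L') (hu : HasFSumF k B.filt (pushSeries k F.T α) u)     -- `u = F_*(α)`
    -- `C m = (F^α)'(β^m)`:
    (C : ℕ → L')
    (hC : ∀ m : ℕ, 1 ≤ m → HasFSumF k B.filt
      (fun j => ((j.factorial : k)⁻¹) •
        F.T (j + m) (Fin.append (fun _ : Fin j => α) (fun _ : Fin m => β))) (C m))
    -- `w = (F^α)_*(β)`:
    (w : L')
    (hw : HasFSumF k B.filt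
      (fun m => if m = 0 then 0 else ((m.factorial : k)⁻¹) • C m) w)
    -- `s = F_*(α + β)`:
    (s : L') (hs : HasFSumF k B.filt (pushSeries k F.T (α + β)) s) :
    s = u + w := by
  classical
  have hαgr : α ∈ A.gr 0 := hα.1
  have hβgr : β ∈ A.gr 0 := hA'.1 ▸ hβ.1
  have hks : ∀ {m : ℕ} (σ : Equiv.Perm (Fin m)), koszulSign k σ (fun _ => (0 : ℤ)) = 1 := by
    intro m σ; unfold koszulSign; simp
  have hsym : ∀ (n : ℕ) (σ : Equiv.Perm (Fin n)) (v : Fin n → L),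
      (∀ i, v i = α ∨ v i = β) → F.T n (v ∘ σ) = F.T n v := by
    intro n σ v hv
    have h := F.T_symm n σ v (fun _ => 0)
      (fun i => by rcases hv i with h | h <;> rw [h] <;> assumption)
    rw [h, hks, one_smul]
  set g : ℕ → ℕ → L' := fun a N => F.T N (fun x : Fin N => if (x : ℕ) < a then α else β) with hg
  set tt : ℕ × ℕ → L' :=
    fun p => ((p.1.factorial : k)⁻¹ * (p.2.factorial : k)⁻¹) • g p.1 (p.1 + p.2) with htt
  have htt_filt : ∀ p : ℕ × ℕ, tt p ∈ B.filt (p.1 + p.2) := by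
    intro p
    refine Submodule.smul_mem _ _ ?_
    have h := F.T_filt (p.1 + p.2) (fun x : Fin (p.1 + p.2) => if (x : ℕ) < p.1 then α else β)
      (fun _ => 1) (fun i => by rw [A.filt_one]; exact Submodule.mem_top)
    simpa [htt, hg] using h
  have htt00 : tt (0, 0) = 0 := by
    simp [htt, hg, F.T_zero]
  have hdiag : ∀ i : ℕ, pushSeries k F.T (α + β) i = ∑ p ∈ Finset.HasAntidiagonal.antidiagonal i, tt p := by
    intro i
    rcases Nat.eq_zero_or_pos i with rfl | hi
    · have h0 : ∑ p ∈ Finset.HasAntidiagonal.antidiagonal 0, tt p = tt (0, 0) := by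
        rw [Finset.Nat.antidiagonal_zero, Finset.sum_singleton]
      rw [h0, htt00]; simp [pushSeries]
    · have h1 : pushSeries k F.T (α + β) i = ((i.factorial : k)⁻¹) • F.T i (fun _ => α + β) := by
        simp [pushSeries, Nat.pos_iff_ne_zero.mp hi]
      rw [h1, my_binomial k F.T α β hsym i, Finset.smul_sum,
        Finset.Nat.sum_antidiagonal_eq_sum_range_succ_mk]
      refine Finset.sum_congr rfl fun j hj => ?_
      have hjn : j ≤ i := Nat.lt_succ_iff.mp (Finset.mem_range.mp hj)
      have hij : j + (i - j) = i := Nat.add_sub_cancel' hjn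
      have hj0 : (j.factorial : k) ≠ 0 := Nat.cast_ne_zero.mpr (Nat.factorial_ne_zero _)
      have hij0 : ((i - j).factorial : k) ≠ 0 := Nat.cast_ne_zero.mpr (Nat.factorial_ne_zero _)
      have hi0 : (i.factorial : k) ≠ 0 := Nat.cast_ne_zero.mpr (Nat.factorial_ne_zero _)
      have hnat := Nat.add_choose_mul_factorial_mul_factorial j (i - j)
      rw [hij, Nat.choose_symm hjn] at hnat
      have hk' : (i.choose j : k) * (j.factorial : k) * ((i - j).factorial : k)
          = (i.factorial : k) := by exact_mod_cast congrArg (Nat.cast : ℕ → k) hnat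
      have hch0 : (i.choose j : k) ≠ 0 :=
        Nat.cast_ne_zero.mpr (Nat.pos_iff_ne_zero.mp (Nat.choose_pos hjn))
      have hsc : ((j.factorial : k)⁻¹ * ((i - j).factorial : k)⁻¹)
          = (i.factorial : k)⁻¹ * (i.choose j : k) := by
        rw [← hk']
        field_simp
      show (i.factorial : k)⁻¹ • ((i.choose j : k) • g j i)
          = ((j.factorial : k)⁻¹ * ((i - j).factorial : k)⁻¹) • g j (j + (i - j))
      rw [hij, smul_smul, hsc]
  have hrow0 : ∀ j : ℕ, pushSeries k F.T α j = tt (j, 0) := by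
    intro j
    rcases Nat.eq_zero_or_pos j with rfl | hj
    · rw [htt00]; simp [pushSeries]
    · have hfun : (fun x : Fin (j + 0) => if (x : ℕ) < j then α else β)
          = (fun _ : Fin (j + 0) => α) := by
        funext x; exact if_pos (by omega)
      simp only [htt, hg, pushSeries, if_neg (Nat.pos_iff_ne_zero.mp hj), hfun]
      simp [Nat.factorial_zero]
  have hCrow : ∀ m n : ℕ, ∃ N, ∀ M, N ≤ M → 1 ≤ m →
      (m.factorial : k)⁻¹ • C m - ∑ j ∈ Finset.range M, tt (j, m) ∈ B.filt n := by
    intro m n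
    rcases Nat.eq_zero_or_pos m with rfl | hm
    · exact ⟨0, fun M _ h1 => absurd h1 (by omega)⟩
    · obtain ⟨N, hN⟩ := hC m hm n
      refine ⟨N, fun M hM _ => ?_⟩
      have h2 : (m.factorial : k)⁻¹ • (C m - ∑ j ∈ Finset.range M,
          (((j.factorial : k)⁻¹) •
            F.T (j + m) (Fin.append (fun _ : Fin j => α) (fun _ : Fin m => β))))
          ∈ B.filt n := Submodule.smul_mem _ _ (hN M hM)
      have h3 : (m.factorial : k)⁻¹ • (∑ j ∈ Finset.range M,
          (((j.factorial : k)⁻¹) •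
            F.T (j + m) (Fin.append (fun _ : Fin j => α) (fun _ : Fin m => β))))
          = ∑ j ∈ Finset.range M, tt (j, m) := by
        rw [Finset.smul_sum]
        refine Finset.sum_congr rfl fun j _ => ?_
        rw [my_append_const j m α β, smul_smul, mul_comm]
      rw [smul_sub, h3] at h2
      exact h2
  suffices hmain : ∀ n : ℕ, s - (u + w) ∈ B.filt n by
    have h0 := B.hausdorff _ hmain
    exact sub_eq_zero.mp h0
  intro n
  obtain ⟨Ns, hNs⟩ := hs n
  obtain ⟨Nu, hNu⟩ := hu n
  obtain ⟨Nw, hNw⟩ := hw n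
  choose Nc hNc using fun m => hCrow m n
  set M₁ : ℕ := max (max Nw n) 1 with hM₁
  set M₂ : ℕ := max (max Nu n) ((Finset.range M₁).sup Nc) with hM₂
  set M₃ : ℕ := max Ns n with hM₃
  have hM₁n : n ≤ M₁ := le_max_of_le_left (le_max_right _ _)
  have hM₂n : n ≤ M₂ := le_max_of_le_left (le_max_right _ _)
  have hM₃n : n ≤ M₃ := le_max_right _ _
  set Tri : Finset (ℕ × ℕ) := (Finset.range M₃).biUnion Finset.HasAntidiagonal.antidiagonal with hTriDef
  set Rect : Finset (ℕ × ℕ) := (Finset.range M₂) ×ˢ (Finset.range M₁) with hRectDef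
  have hmemTri : ∀ p : ℕ × ℕ, p ∈ Tri ↔ p.1 + p.2 < M₃ := by
    intro p
    simp only [hTriDef, Finset.mem_biUnion, Finset.mem_range, Finset.HasAntidiagonal.mem_antidiagonal]
    constructor
    · rintro ⟨i, hi, rfl⟩; exact hi
    · intro h; exact ⟨p.1 + p.2, h, rfl⟩
  have hTri : s - ∑ p ∈ Tri, tt p ∈ B.filt n := by
    have h := hNs M₃ (le_max_left _ _)
    have hdisj : (↑(Finset.range M₃) : Set ℕ).PairwiseDisjoint Finset.HasAntidiagonal.antidiagonal := by
      intro a _ b _ hab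
      simp only [Function.onFun, Finset.disjoint_left]
      intro p hpa hpb
      exact hab (by rw [← Finset.HasAntidiagonal.mem_antidiagonal.mp hpa, ← Finset.HasAntidiagonal.mem_antidiagonal.mp hpb])
    rw [hTriDef, Finset.sum_biUnion hdisj, Finset.sum_congr rfl fun i _ => (hdiag i).symm]
    exact h
  have hRect : (u + w) - ∑ p ∈ Rect, tt p ∈ B.filt n := by
    have hu' : u - ∑ j ∈ Finset.range M₂, tt (j, 0) ∈ B.filt n := by
      have h := hNu M₂ (le_max_of_le_left (le_max_left _ _))
      rwa [Finset.sum_congr rfl fun j _ => hrow0 j] at h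
    have hw1 : w - ∑ m ∈ Finset.range M₁,
        (if m = 0 then 0 else (m.factorial : k)⁻¹ • C m) ∈ B.filt n :=
      hNw M₁ (le_max_of_le_left (le_max_left _ _))
    have hw2 : (∑ m ∈ Finset.range M₁, (if m = 0 then 0 else (m.factorial : k)⁻¹ • C m))
        - ∑ m ∈ Finset.range M₁,
            (if m = 0 then 0 else ∑ j ∈ Finset.range M₂, tt (j, m)) ∈ B.filt n := by
      rw [← Finset.sum_sub_distrib]
      refine Submodule.sum_mem _ fun m hm => ?_
      rcases Nat.eq_zero_or_pos m with rfl | hm1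
      · simp
      · rw [if_neg (by omega), if_neg (by omega)]
        refine hNc m M₂ ?_ hm1
        exact le_trans (Finset.le_sup hm) (le_max_right _ _)
    have hrect_split : ∑ p ∈ Rect, tt p
        = (∑ j ∈ Finset.range M₂, tt (j, 0))
          + ∑ m ∈ Finset.range M₁,
              (if m = 0 then 0 else ∑ j ∈ Finset.range M₂, tt (j, m)) := by
      have h0mem : (0 : ℕ) ∈ Finset.range M₁ := by
        simp only [Finset.mem_range]
        have : 1 ≤ M₁ := le_max_right _ _
        omega
      have hsplit : ∀ mm : ℕ, (if mm = 0 then (0 : L') else ∑ j ∈ Finset.range M₂, tt (j, mm))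
          = (∑ j ∈ Finset.range M₂, tt (j, mm))
            - (if mm = 0 then ∑ j ∈ Finset.range M₂, tt (j, mm) else 0) := by
        intro mm; by_cases h : mm = 0 <;> simp [h]
      rw [hRectDef, Finset.sum_product, Finset.sum_comm,
        Finset.sum_congr rfl fun mm _ => hsplit mm, Finset.sum_sub_distrib,
        Finset.sum_ite_eq' (Finset.range M₁) 0 (fun mm => ∑ j ∈ Finset.range M₂, tt (j, mm)),
        if_pos h0mem]
      abel
    have heq : (u + w) - ∑ p ∈ Rect, tt p
        = (u - ∑ j ∈ Finset.range M₂, tt (j, 0))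
          + ((w - ∑ m ∈ Finset.range M₁, (if m = 0 then 0 else (m.factorial : k)⁻¹ • C m))
            + ((∑ m ∈ Finset.range M₁, (if m = 0 then 0 else (m.factorial : k)⁻¹ • C m))
              - ∑ m ∈ Finset.range M₁,
                  (if m = 0 then 0 else ∑ j ∈ Finset.range M₂, tt (j, m)))) := by
      rw [hrect_split]; abel
    rw [heq]
    exact add_mem hu' (add_mem hw1 hw2)
  have hTR : (∑ p ∈ Tri, tt p) - (∑ p ∈ Rect, tt p) ∈ B.filt n := by
    refine my_sum_sub_sum_mem k (B.filt n) _ _ tt ?_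
    rintro p (⟨hpT, hpR⟩ | ⟨hpR, hpT⟩)
    · have hn : n ≤ p.1 + p.2 := by
        rw [hRectDef, Finset.mem_product, Finset.mem_range, Finset.mem_range, not_and_or,
          not_lt, not_lt] at hpR
        rcases hpR with h | h
        · omega
        · omega
      exact B.filt_antitone hn (htt_filt p)
    · have hn : n ≤ p.1 + p.2 := by
        rw [hmemTri, not_lt] at hpT
        omega
      exact B.filt_antitone hn (htt_filt p)
  have hfin : s - (u + w)
      = (s - ∑ p ∈ Tri, tt p) - ((u + w) - ∑ p ∈ Rect, tt p)
        + ((∑ p ∈ Tri, tt p) - (∑ p ∈ Rect, tt p)) := by abel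
  rw [hfin]
  exact add_mem (sub_mem hTri hRect) hTR
end
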